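/- arXiv:math/0109193 — 9 statements merged into one kernel-verified Lean document; each statement's English description precedes it below -/
import Mathlib

section
/- Let U be an N×N unitary matrix written in block form U = [[A, B], [C, D]] according to the partition N = (N-1) + 1, so that D is a complex number. If D ≠ -1, then the (N-1)×(N-1) matrix V = A - B(1+D)⁻¹C is unitary. -/
open Matrix

/-- Let `U` be an `N×N` unitary matrix written in block form `U = [[A,B],[C,D]]` for the
partition `N = (N-1)+1`, so `D` is a scalar `d`. If `d ≠ -1` then
`V = A - B (1+d)⁻¹ C` is unitary. -/
theorem schur_complement_of_unitary_is_unitary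
    (n : ℕ) (A : Matrix (Fin n) (Fin n) ℂ) (B : Matrix (Fin n) (Fin 1) ℂ)
    (C : Matrix (Fin 1) (Fin n) ℂ) (d : ℂ)
    (hU : Matrix.fromBlocks A B C (Matrix.of fun _ _ => d) ∈
      Matrix.unitaryGroup (Fin n ⊕ Fin 1) ℂ)
    (hd : d ≠ -1) :
    A - (1 + d)⁻¹ • (B * C) ∈ Matrix.unitaryGroup (Fin n) ℂ := by
  have hd1 : (1 + d) ≠ 0 := fun h => hd (by linear_combination h)
  have hd2 : (1 + (starRingEnd ℂ) d) ≠ 0 := by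
    intro h
    apply hd1
    have := congrArg star h
    simpa using this
  have hDm : (Matrix.of fun _ _ => d : Matrix (Fin 1) (Fin 1) ℂ) = d • 1 := by
    ext i j
    fin_cases i; fin_cases j; simp
  rw [Matrix.mem_unitaryGroup_iff, star_eq_conjTranspose,
    Matrix.fromBlocks_conjTranspose, Matrix.fromBlocks_multiply,
    ← Matrix.fromBlocks_one] at hU
  have e11 := congrArg Matrix.toBlocks₁₁ hU
  have e12 := congrArg Matrix.toBlocks₁₂ hU
  have e21 := congrArg Matrix.toBlocks₂₁ hU
  have e22 := congrArg Matrix.toBlocks₂₂ hU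
  simp only [Matrix.toBlocks_fromBlocks₁₁, Matrix.toBlocks_fromBlocks₁₂,
    Matrix.toBlocks_fromBlocks₂₁, Matrix.toBlocks_fromBlocks₂₂, hDm,
    Matrix.conjTranspose_smul, Matrix.conjTranspose_one, Matrix.mul_smul,
    Matrix.smul_mul, Matrix.mul_one, Matrix.one_mul, smul_smul] at e11 e12 e21 e22
  have hAA : A * Aᴴ = 1 - B * Bᴴ := eq_sub_of_add_eq e11
  have hAC : A * Cᴴ = -(star d • B) := by
    rw [eq_neg_iff_add_eq_zero]; exact e12
  have hCA : C * Aᴴ = -(d • Bᴴ) := by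
    rw [eq_neg_iff_add_eq_zero]; exact e21
  have hCC : C * Cᴴ = (1 - star d * d) • 1 := by
    rw [sub_smul, one_smul]; exact eq_sub_of_add_eq e22
  have hBCA : B * C * Aᴴ = -(d • (B * Bᴴ)) := by
    rw [Matrix.mul_assoc, hCA]; simp [Matrix.mul_smul]
  have hBCC : B * C * Cᴴ = (1 - star d * d) • B := by
    rw [Matrix.mul_assoc, hCC]; simp [Matrix.mul_smul]
  rw [Matrix.mem_unitaryGroup_iff, star_eq_conjTranspose]
  simp only [conjTranspose_sub, conjTranspose_smul, conjTranspose_mul,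
    Matrix.sub_mul, Matrix.mul_sub, Matrix.mul_smul, Matrix.smul_mul,
    ← Matrix.mul_assoc, hAA, hAC, hBCA, hBCC, Matrix.mul_neg, Matrix.neg_mul,
    smul_neg, smul_smul, Matrix.mul_one]
  match_scalars
  · ring
  · have hp : (1 + d + d * (starRingEnd ℂ) d + (starRingEnd ℂ) d) ≠ 0 := by
      intro h
      exact mul_ne_zero hd1 hd2 (by linear_combination h)
    field_simp [hp]
    rw [one_div, star_inv₀, star_add, star_one]
    have hd3 : (1 + star d) ≠ 0 := hd2
    linear_combination (inv_mul_cancel₀ hd3)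
end

section
/- Let X be an N×N complex matrix with (X + X*)/2 > -1 (i.e., 1 + Re X positive definite), written in block form X = [[A,B],[C,D]] for the partition N = (N-1)+1 where D is scalar. Then Re D > -1 (so 1+D ≠ 0), and the Schur complement X₁ = A - B(1+D)⁻¹C satisfies (X₁ + X₁*)/2 > -1. -/
open Matrix ComplexOrder

lemma schur_herm_aux (m : Type*) [Fintype m] [DecidableEq m] (Y : Matrix m m ℂ) :
    (1 + ((1:ℂ)/2) • (Y + Yᴴ)).IsHermitian := by
  unfold Matrix.IsHermitian
  rw [conjTranspose_add, conjTranspose_smul, conjTranspose_add, conjTranspose_conjTranspose,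
    conjTranspose_one, add_comm Yᴴ Y]
  norm_num

lemma schur_quadform_eq (m : Type*) [Fintype m] [DecidableEq m] (Y : Matrix m m ℂ) (x : m → ℂ) :
    star x ⬝ᵥ ((1 + ((1:ℂ)/2) • (Y + Yᴴ)) *ᵥ x)
      = star x ⬝ᵥ x + (1/2) * (star x ⬝ᵥ (Y *ᵥ x) + star (star x ⬝ᵥ (Y *ᵥ x))) := by
  have h : star x ⬝ᵥ (Yᴴ *ᵥ x) = star (star x ⬝ᵥ (Y *ᵥ x)) := by
    rw [star_dotProduct, Matrix.star_mulVec, conjTranspose_conjTranspose,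
      ← Matrix.dotProduct_mulVec]
  rw [Matrix.add_mulVec, Matrix.one_mulVec, Matrix.smul_mulVec, Matrix.add_mulVec,
    dotProduct_add, dotProduct_smul, dotProduct_add, h]
  simp [smul_eq_mul]

lemma schur_key_id (n : ℕ) (A : Matrix (Fin n) (Fin n) ℂ) (B : Matrix (Fin n) (Fin 1) ℂ)
    (C : Matrix (Fin 1) (Fin n) ℂ) (d : ℂ) (hd : 1 + d ≠ 0) (v : Fin n → ℂ)
    (t : Fin 1 → ℂ) (ht : t = fun _ => -(1 + d)⁻¹ * (C *ᵥ v) 0) :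
    star (Sum.elim v t) ⬝ᵥ Sum.elim v t
      + star (Sum.elim v t) ⬝ᵥ ((Matrix.fromBlocks A B C (Matrix.of fun _ _ => d)) *ᵥ Sum.elim v t)
      = star v ⬝ᵥ v + star v ⬝ᵥ ((A - (1 + d)⁻¹ • (B * C)) *ᵥ v) := by
  have hst : star (Sum.elim v t) = Sum.elim (star v) (star t) := funext fun s => by cases s <;> rfl
  have hBt : B *ᵥ t = -(1 + d)⁻¹ • ((B * C) *ᵥ v) := by
    rw [← Matrix.mulVec_mulVec]
    funext i
    simp [Matrix.mulVec, dotProduct, Fin.sum_univ_one, ht, Finset.mul_sum,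
      Matrix.mul_apply]
    congr 1
    funext j
    ring
  have hDt : star t ⬝ᵥ t + star t ⬝ᵥ (C *ᵥ v + (Matrix.of fun _ _ => d : Matrix (Fin 1) (Fin 1) ℂ) *ᵥ t) = 0 := by
    have h1 : (1 + d) * (1 + d)⁻¹ = 1 := mul_inv_cancel₀ hd
    simp only [dotProduct, Matrix.mulVec, Fin.sum_univ_one, ht, Pi.star_apply,
      Pi.add_apply, Matrix.of_apply, star_mul', star_neg]
    set c := ∑ j, C 0 j * v j with hc
    linear_combination (star ((1 + d)⁻¹) * star c * c) * h1
  rw [hst, Matrix.fromBlocks_mulVec, sumElim_dotProduct_sumElim,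
    sumElim_dotProduct_sumElim, Sum.elim_comp_inl, Sum.elim_comp_inr]
  rw [Matrix.sub_mulVec, Matrix.smul_mulVec, dotProduct_sub, dotProduct_smul,
    dotProduct_add, hBt, dotProduct_smul]
  simp only [smul_eq_mul, neg_smul]
  linear_combination hDt

/-- Let `X` be an `N×N` complex matrix with `Re X > -1`, i.e. `1 + (X + X*)/2`
positive definite, written in blocks `[[A,B],[C,D]]` for `N = (N-1)+1` with scalar
`D = d`. Then `Re d > -1` (so `1 + d ≠ 0`), and the Schur complement
`X₁ = A - B(1+d)⁻¹C` also satisfies `1 + (X₁ + X₁*)/2` positive definite. -/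
theorem schur_complement_re_gt_neg_one
    (n : ℕ) (A : Matrix (Fin n) (Fin n) ℂ) (B : Matrix (Fin n) (Fin 1) ℂ)
    (C : Matrix (Fin 1) (Fin n) ℂ) (d : ℂ)
    (X : Matrix (Fin n ⊕ Fin 1) (Fin n ⊕ Fin 1) ℂ)
    (hX : X = Matrix.fromBlocks A B C (Matrix.of fun _ _ => d))
    (hpos : (1 + ((1 : ℂ)/2) • (X + Xᴴ)).PosDef) :
    (-1 < d.re ∧ 1 + d ≠ 0) ∧
      (1 + ((1 : ℂ)/2) •
        ((A - (1 + d)⁻¹ • (B * C)) + (A - (1 + d)⁻¹ • (B * C))ᴴ)).PosDef := by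
  subst hX
  -- Part 1 : `-1 < d.re`
  have hx0 : (Sum.elim (0 : Fin n → ℂ) 1 : Fin n ⊕ Fin 1 → ℂ) ≠ 0 := by
    intro h
    have := congrFun h (Sum.inr 0)
    simp at this
  have hq0 := hpos.dotProduct_mulVec_pos hx0
  rw [Complex.lt_def] at hq0
  simp [Matrix.mulVec, dotProduct, Matrix.fromBlocks, Fin.sum_univ_one,
    Matrix.conjTranspose_apply, Complex.add_re, Complex.add_im] at hq0
  have hdre : -1 < d.re := by linarith [hq0]
  have hd : (1 : ℂ) + d ≠ 0 := by
    intro h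
    have h2 : ((1 : ℂ) + d).re = 0 := by rw [h]; simp
    simp [Complex.add_re] at h2
    linarith
  refine ⟨⟨hdre, hd⟩, Matrix.PosDef.of_dotProduct_mulVec_pos (schur_herm_aux _ _) fun v hv => ?_⟩
  -- Part 2 : positivity of the quadratic form of the Schur complement
  set t : Fin 1 → ℂ := fun _ => -(1 + d)⁻¹ * (C *ᵥ v) 0 with ht
  set x : Fin n ⊕ Fin 1 → ℂ := Sum.elim v t with hxdef
  have hx : x ≠ 0 := by
    intro h
    exact hv (funext fun i => congrFun h (Sum.inl i))
  have hqx := hpos.dotProduct_mulVec_pos hx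
  have k := schur_key_id n A B C d hd v t ht
  have e : star x ⬝ᵥ ((1 + ((1 : ℂ)/2) • ((Matrix.fromBlocks A B C (Matrix.of fun _ _ => d))
        + (Matrix.fromBlocks A B C (Matrix.of fun _ _ => d))ᴴ)) *ᵥ x)
      = star v ⬝ᵥ ((1 + ((1 : ℂ)/2) •
        ((A - (1 + d)⁻¹ • (B * C)) + (A - (1 + d)⁻¹ • (B * C))ᴴ)) *ᵥ v) := by
    rw [schur_quadform_eq, schur_quadform_eq]
    have k2 := congrArg star k
    simp only [star_add] at k2
    have hsx : star x ⬝ᵥ x = star (star x ⬝ᵥ x) := star_dotProduct x x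
    have hsv : star v ⬝ᵥ v = star (star v ⬝ᵥ v) := star_dotProduct v v
    linear_combination (1/2 : ℂ) * k + (1/2 : ℂ) * k2 + (1/2 : ℂ) * hsx - (1/2 : ℂ) * hsv
  rw [← e]
  exact hqx
end

section
/- Krattenthaler's determinant evaluation: for complex numbers x₁,…,x_N, a₁,…,a_{N-1}, b₁,…,b_{N-1}, det[ ∏_{k=1}^{j-1}(x_i + a_k) · ∏_{k=j}^{N-1}(x_i + b_k) ]_{i,j=1}^{N} = ∏_{1≤i<j≤N}(x_i - x_j) · ∏_{1≤i≤j≤N-1}(a_i - b_j). -/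
open Matrix Finset

namespace KrattAux

open Polynomial

/-- the column polynomial of Krattenthaler's matrix -/
noncomputable def kPoly {R : Type*} [CommRing R] (N : ℕ) (a b : ℕ → R) (j : ℕ) : R[X] :=
  (∏ k ∈ Finset.range j, (X + C (a k))) * ∏ k ∈ Finset.Ico j (N - 1), (X + C (b k))

/-- the coefficient matrix -/
noncomputable def kC {R : Type*} [CommRing R] (N : ℕ) (a b : ℕ → R) :
    Matrix (Fin N) (Fin N) R :=
  Matrix.of fun k j => (kPoly N a b (j : ℕ)).coeff (k : ℕ)

/-- Krattenthaler's matrix -/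
noncomputable def kM {R : Type*} [CommRing R] (N : ℕ) (x : Fin N → R) (a b : ℕ → R) :
    Matrix (Fin N) (Fin N) R :=
  Matrix.of fun i j =>
    (∏ k ∈ Finset.range (j : ℕ), (x i + a k)) * ∏ k ∈ Finset.Ico (j : ℕ) (N - 1), (x i + b k)

/-- the sign that shows up -/
noncomputable def sgn (N : ℕ) : ℂ := (-1) ^ (∑ i ∈ Finset.range N, i)

lemma sgn_mul_self (N : ℕ) : sgn N * sgn N = 1 := by
  simp [sgn, ← pow_add, ← two_mul, pow_mul, neg_one_sq]

lemma sgn_succ (n : ℕ) : sgn (n + 1) = sgn n * (-1) ^ n := by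
  simp [sgn, Finset.sum_range_succ, pow_add]

lemma kPoly_monic {R : Type*} [CommRing R] (N : ℕ) (a b : ℕ → R) (j : ℕ) :
    (kPoly N a b j).Monic := by
  apply Monic.mul <;> exact monic_prod_of_monic _ _ fun k _ => monic_X_add_C _

lemma kPoly_natDegree {R : Type*} [CommRing R] [Nontrivial R] (N : ℕ) (a b : ℕ → R) (j : ℕ)
    (hj : j ≤ N - 1) : (kPoly N a b j).natDegree = N - 1 := by
  rw [kPoly, Monic.natDegree_mul (by exact monic_prod_of_monic _ _ fun k _ => monic_X_add_C _)
    (by exact monic_prod_of_monic _ _ fun k _ => monic_X_add_C _),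
    natDegree_prod_of_monic _ _ (fun k _ => monic_X_add_C _),
    natDegree_prod_of_monic _ _ (fun k _ => monic_X_add_C _)]
  simp [natDegree_X_add_C, Nat.card_Ico]
  omega

lemma kPoly_eval {R : Type*} [CommRing R] (N : ℕ) (a b : ℕ → R) (j : ℕ) (t : R) :
    (kPoly N a b j).eval t =
      (∏ k ∈ Finset.range j, (t + a k)) * ∏ k ∈ Finset.Ico j (N - 1), (t + b k) := by
  simp [kPoly, eval_prod]

lemma kM_eq_mul {R : Type*} [CommRing R] [Nontrivial R] (N : ℕ) (x : Fin N → R) (a b : ℕ → R) :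
    kM N x a b = vandermonde x * kC N a b := by
  ext i j
  rw [Matrix.mul_apply]
  have hj := j.isLt
  have hdeg : (kPoly N a b (j : ℕ)).natDegree < N := by
    rw [kPoly_natDegree N a b _ (by omega)]
    omega
  have := Polynomial.eval_eq_sum_range' hdeg (x i)
  rw [kM, Matrix.of_apply, ← kPoly_eval, this, ← Fin.sum_univ_eq_sum_range]
  simp [vandermonde, kC, mul_comm]

lemma detA {R : Type*} [CommRing R] [Nontrivial R] (N : ℕ) (x : Fin N → R) (a b : ℕ → R) :
    (kM N x a b).det = (∏ i : Fin N, ∏ j ∈ Finset.Ioi i, (x j - x i)) * (kC N a b).det := by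
  rw [kM_eq_mul, Matrix.det_mul, Matrix.det_vandermonde]

lemma prod_Ioi_fin {M : Type*} [CommMonoid M] (N : ℕ) (f : ℕ → ℕ → M) :
    (∏ i : Fin N, ∏ j ∈ Finset.Ioi i, f (i : ℕ) (j : ℕ))
      = ∏ i ∈ Finset.range N, ∏ j ∈ Finset.Ico (i + 1) N, f i j := by
  rw [← Fin.prod_univ_eq_prod_range (fun i => ∏ j ∈ Finset.Ico (i + 1) N, f i j) N]
  refine Finset.prod_congr rfl fun i _ => ?_
  refine Finset.prod_bij' (fun j _ => (j : ℕ)) (fun m hm => ⟨m, (Finset.mem_Ico.mp hm).2⟩)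
    ?_ ?_ ?_ ?_ ?_ <;> intro j hj
  · have h1 : i < j := Finset.mem_Ioi.mp hj
    exact Finset.mem_Ico.mpr ⟨Fin.lt_def.mp h1, j.isLt⟩
  · have h1 := Finset.mem_Ico.mp hj
    exact Finset.mem_Ioi.mpr (by rw [Fin.lt_def]; simpa using h1.1)
  · rfl
  · rfl
  · rfl

lemma detB1 (N : ℕ) (a b : ℕ → ℂ)
    (hb : ∀ i < N - 1, ∀ j < N - 1, b i = b j → i = j) :
    (kC N a b).det = sgn N * ∏ j ∈ Finset.range (N - 1), ∏ i ∈ Finset.range (j + 1), (a i - b j) := by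
  rcases Nat.eq_zero_or_pos N with hN | hN
  · subst hN
    simp [sgn]
  obtain ⟨n, rfl⟩ : ∃ n, N = n + 1 := ⟨N - 1, by omega⟩
  simp only [Nat.add_sub_cancel] at hb ⊢
  -- choose t avoiding the values -b k
  obtain ⟨t, ht⟩ := Infinite.exists_notMem_finset ((Finset.range n).image fun k => -b k)
  have ht' : ∀ k, k < n → t + b k ≠ 0 := by
    intro k hk h
    refine ht (Finset.mem_image.mpr ⟨k, Finset.mem_range.mpr hk, ?_⟩)
    have : t = -b k := by
      have := neg_eq_of_add_eq_zero_left h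
      rw [← this]
    rw [this]
  set x' : ℕ → ℂ := fun m => if m < n then -b m else t with hx'
  set x : Fin (n + 1) → ℂ := fun i => x' (i : ℕ) with hx
  -- the permutation rotating rows
  set σ : Equiv.Perm (Fin (n + 1)) := (finRotate (n + 1))⁻¹ with hσ
  have hσval : ∀ i : Fin (n + 1), ((σ i : Fin (n + 1)) : ℕ)
      = if (i : ℕ) = 0 then n else (i : ℕ) - 1 := by
    intro i
    have h1 : finRotate (n + 1) (σ i) = i := Equiv.apply_symm_apply _ i
    rw [finRotate_succ_apply] at h1
    have h2 : (((σ i) + 1 : Fin (n + 1)) : ℕ) = ((σ i : Fin (n+1)) : ℕ) + 1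
        ∨ ((σ i : Fin (n+1)) : ℕ) = n ∧ (((σ i) + 1 : Fin (n + 1)) : ℕ) = 0 := by
      have := (σ i).isLt
      rcases Nat.lt_or_ge ((σ i : Fin (n+1)) : ℕ) n with h | h
      · left
        rw [Fin.val_add_one_of_lt]
        rw [Fin.lt_def, Fin.val_last]; omega
      · right
        have hval : (σ i : Fin (n+1)) = Fin.last n := by
          apply Fin.ext; rw [Fin.val_last]; omega
        constructor
        · omega
        · rw [hval]; simp
    have h3 := congrArg Fin.val h1
    have hi := i.isLt
    rcases h2 with h2 | ⟨h2a, h2b⟩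
    · rw [h2] at h3
      have hne : (i : ℕ) ≠ 0 := by omega
      rw [if_neg hne]; omega
    · rw [h2b] at h3
      rw [if_pos h3.symm, h2a]
  set M := kM (n + 1) x a b with hM
  have hMapp : ∀ i j : Fin (n + 1), M i j =
      (∏ k ∈ Finset.range (j : ℕ), (x i + a k)) *
        ∏ k ∈ Finset.Ico (j : ℕ) n, (x i + b k) := by
    intro i j
    simp [hM, kM]
  have hA := detA (n + 1) x a b
  -- triangularity of the row-rotated matrix
  have htri : (M.submatrix σ id).BlockTriangular id := by
    intro i j hij
    simp only [id_eq] at hij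
    have hji : (j : ℕ) < (i : ℕ) := hij
    have hi := i.isLt
    have hσ1 : ((σ i : Fin (n + 1)) : ℕ) = (i : ℕ) - 1 := by
      rw [hσval, if_neg (by omega)]
    rw [Matrix.submatrix_apply, id_eq, hMapp]
    apply mul_eq_zero_of_right
    refine Finset.prod_eq_zero (i := ((σ i : Fin (n + 1)) : ℕ)) ?_ ?_
    · rw [Finset.mem_Ico, hσ1]
      omega
    · have hxσ : x (σ i) = -b ((σ i : Fin (n + 1)) : ℕ) := by
        simp only [hx, hx']
        rw [if_pos (by rw [hσ1]; omega)]
      rw [hxσ]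
      ring
  have hperm := Matrix.det_permute σ M
  have hdetM' : (M.submatrix σ id).det = ∏ i : Fin (n + 1), M (σ i) i := by
    rw [Matrix.det_of_upperTriangular htri]
    exact Finset.prod_congr rfl fun i _ => rfl
  have hsign : ((Equiv.Perm.sign σ : ℤ) : ℂ) = (-1) ^ n := by
    rw [hσ, Equiv.Perm.sign_inv, sign_finRotate]
    push_cast
    ring
  -- the diagonal product
  have hdiag : (∏ i : Fin (n + 1), M (σ i) i)
      = (∏ k ∈ Finset.range n, (t + b k)) *
        ∏ i ∈ Finset.range n,
          ((∏ k ∈ Finset.range (i + 1), (a k - b i)) * ∏ k ∈ Finset.Ico (i + 1) n, (b k - b i)) := by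
    rw [Fin.prod_univ_succ]
    congr 1
    · have h0 : ((σ 0 : Fin (n + 1)) : ℕ) = n := by rw [hσval]; simp
      have hxσ : x (σ 0) = t := by
        simp only [hx, hx', h0, if_neg (lt_irrefl n)]
      rw [hMapp, hxσ]
      simp only [Fin.val_zero, Finset.range_zero, Finset.prod_empty, one_mul]
      rw [Finset.range_eq_Ico]
    · rw [← Fin.prod_univ_eq_prod_range (fun i =>
        (∏ k ∈ Finset.range (i + 1), (a k - b i)) * ∏ k ∈ Finset.Ico (i + 1) n, (b k - b i)) n]
      refine Finset.prod_congr rfl fun i _ => ?_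
      have hsv : ((i.succ : Fin (n + 1)) : ℕ) = (i : ℕ) + 1 := by simp
      have hσ1 : ((σ i.succ : Fin (n + 1)) : ℕ) = (i : ℕ) := by
        rw [hσval, hsv, if_neg (by omega)]
        omega
      have hxσ : x (σ i.succ) = -b (i : ℕ) := by
        simp only [hx, hx', hσ1, if_pos i.isLt]
      rw [hMapp, hxσ, hsv]
      congr 1
      · exact Finset.prod_congr rfl fun k _ => by ring
      · exact Finset.prod_congr rfl fun k _ => by ring
  -- the Vandermonde product
  have hV : (∏ i : Fin (n + 1), ∏ j ∈ Finset.Ioi i, (x j - x i))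
      = (∏ i ∈ Finset.range n, ∏ j ∈ Finset.Ico (i + 1) n, (b i - b j)) *
          ∏ i ∈ Finset.range n, (t + b i) := by
    have hconv := prod_Ioi_fin (n + 1) (fun i j => x' j - x' i)
    rw [hx]
    rw [hconv, Finset.prod_range_succ, Finset.Ico_self, Finset.prod_empty, mul_one,
      ← Finset.prod_mul_distrib]
    refine Finset.prod_congr rfl fun i hi => ?_
    rw [Finset.mem_range] at hi
    rw [Finset.prod_Ico_succ_top (by omega : i + 1 ≤ n)]
    congr 1
    · refine Finset.prod_congr rfl fun j hj => ?_
      rw [Finset.mem_Ico] at hj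
      simp only [hx', if_pos hj.2, if_pos hi]
      ring
    · simp only [hx', if_neg (lt_irrefl n), if_pos hi]
      ring
  -- flipping the b-differences
  have hflip : (∏ i ∈ Finset.range n, ∏ k ∈ Finset.Ico (i + 1) n, (b k - b i))
      = sgn n * ∏ i ∈ Finset.range n, ∏ k ∈ Finset.Ico (i + 1) n, (b i - b k) := by
    have hstep : ∀ i ∈ Finset.range n, (∏ k ∈ Finset.Ico (i + 1) n, (b k - b i))
        = (-1 : ℂ) ^ (n - 1 - i) * ∏ k ∈ Finset.Ico (i + 1) n, (b i - b k) := by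
      intro i hi
      have hcard : (n - 1 - i) = (Finset.Ico (i + 1) n).card := by
        rw [Nat.card_Ico]; omega
      rw [hcard, ← Finset.prod_const, ← Finset.prod_mul_distrib]
      exact Finset.prod_congr rfl fun k _ => by ring
    rw [Finset.prod_congr rfl hstep, Finset.prod_mul_distrib]
    congr 1
    rw [Finset.prod_pow_eq_pow_sum, sgn]
    congr 1
    exact Finset.sum_range_reflect id n
  -- assemble
  set Q := ∏ i ∈ Finset.range n, ∏ j ∈ Finset.Ico (i + 1) n, (b i - b j) with hQdef
  set T := ∏ i ∈ Finset.range n, (t + b i) with hTdef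
  set P := ∏ j ∈ Finset.range n, ∏ i ∈ Finset.range (j + 1), (a i - b j) with hPdef
  have hQ : Q ≠ 0 := by
    rw [hQdef]
    rw [Finset.prod_ne_zero_iff]
    intro i hi
    rw [Finset.prod_ne_zero_iff]
    intro j hj
    rw [Finset.mem_range] at hi
    rw [Finset.mem_Ico] at hj
    refine sub_ne_zero.mpr fun h => ?_
    have := hb i (by omega) j (by omega) h
    omega
  have hT : T ≠ 0 := by
    rw [hTdef, Finset.prod_ne_zero_iff]
    intro i hi
    rw [Finset.mem_range] at hi
    exact ht' i hi
  have hMdet : M.det = (-1 : ℂ) ^ n * ((∏ k ∈ Finset.range n, (t + b k)) *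
      (P * (sgn n * Q))) := by
    have h1 : ((Equiv.Perm.sign σ : ℤ) : ℂ) * M.det
        = (∏ k ∈ Finset.range n, (t + b k)) * (P * (sgn n * Q)) := by
      rw [← hperm, hdetM', hdiag, Finset.prod_mul_distrib, ← hflip]
    rw [hsign] at h1
    have h2 : ((-1 : ℂ) ^ n) * ((-1 : ℂ) ^ n) = 1 := by
      rw [← mul_pow]; norm_num
    calc M.det = (((-1 : ℂ) ^ n) * ((-1 : ℂ) ^ n)) * M.det := by rw [h2, one_mul]
      _ = (-1 : ℂ) ^ n * ((-1 : ℂ) ^ n * M.det) := by ring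
      _ = _ := by rw [h1]
  have key : (Q * T) * (kC (n + 1) a b).det = (Q * T) * (sgn (n + 1) * P) := by
    calc (Q * T) * (kC (n + 1) a b).det = M.det := by rw [hA, hV]
      _ = (Q * T) * (sgn (n + 1) * P) := by
          rw [hMdet, sgn_succ, hTdef]
          ring
  exact mul_left_cancel₀ (mul_ne_zero hQ hT) key

lemma kC_map {R S : Type*} [CommRing R] [CommRing S] (f : R →+* S) (N : ℕ) (a b : ℕ → R) :
    (kC N a b).map f = kC N (f ∘ a) (f ∘ b) := by
  ext k j
  simp only [Matrix.map_apply, kC, Matrix.of_apply, ← Polynomial.coeff_map]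
  congr 1
  simp only [kPoly, Polynomial.map_mul, Polynomial.map_prod, Polynomial.map_add,
    Polynomial.map_X, Polynomial.map_C, Function.comp]

lemma kC_congr (N : ℕ) (a b b' : ℕ → ℂ) (h : ∀ k, k < N - 1 → b k = b' k) :
    kC N a b = kC N a b' := by
  ext k j
  simp only [kC, Matrix.of_apply, kPoly]
  congr 2
  refine Finset.prod_congr rfl fun m hm => ?_
  rw [Finset.mem_Ico] at hm
  rw [h m hm.2]

lemma detB (N : ℕ) (a b : ℕ → ℂ) :
    (kC N a b).det = sgn N * ∏ j ∈ Finset.range (N - 1), ∏ i ∈ Finset.range (j + 1), (a i - b j) := by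
  set n := N - 1 with hn
  set bp : ℕ → MvPolynomial (Fin n) ℂ :=
    fun k => if h : k < n then MvPolynomial.X ⟨k, h⟩ else 0 with hbp
  set ap : ℕ → MvPolynomial (Fin n) ℂ := fun k => MvPolynomial.C (a k) with hap
  set G : MvPolynomial (Fin n) ℂ := (kC N ap bp).det -
      MvPolynomial.C (sgn N) *
        ∏ j ∈ Finset.range n, ∏ i ∈ Finset.range (j + 1), (MvPolynomial.C (a i) - bp j)
    with hG
  set V : MvPolynomial (Fin n) ℂ :=
      ∏ i : Fin n, ∏ j ∈ Finset.Ioi i, (MvPolynomial.X j - MvPolynomial.X i) with hV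
  have heval : ∀ y : Fin n → ℂ, (MvPolynomial.eval y) G =
      (kC N a (fun k => if h : k < n then y ⟨k, h⟩ else 0)).det -
        sgn N * ∏ j ∈ Finset.range n, ∏ i ∈ Finset.range (j + 1),
          (a i - (if h : j < n then y ⟨j, h⟩ else 0)) := by
    intro y
    rw [hG, map_sub, _root_.map_mul, MvPolynomial.eval_C]
    congr 1
    · rw [RingHom.map_det, RingHom.mapMatrix_apply, kC_map]
      have h1 : (⇑(MvPolynomial.eval y) ∘ ap) = a := by
        funext k; simp [hap]
      have h2 : (⇑(MvPolynomial.eval y) ∘ bp) = fun k => if h : k < n then y ⟨k, h⟩ else 0 := by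
        funext k
        by_cases h : k < n <;> simp [hbp, h]
      rw [h1, h2]
    · congr 1
      rw [map_prod]
      refine Finset.prod_congr rfl fun j hj => ?_
      rw [map_prod]
      refine Finset.prod_congr rfl fun i hi => ?_
      rw [map_sub, MvPolynomial.eval_C]
      congr 1
      by_cases h : j < n <;> simp [hbp, h]
  have hevalV : ∀ y : Fin n → ℂ, (MvPolynomial.eval y) V =
      ∏ i : Fin n, ∏ j ∈ Finset.Ioi i, (y j - y i) := by
    intro y
    rw [hV, map_prod]
    refine Finset.prod_congr rfl fun i _ => ?_
    rw [map_prod]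
    exact Finset.prod_congr rfl fun j _ => by
      rw [map_sub, MvPolynomial.eval_X, MvPolynomial.eval_X]
  have hGV : G * V = 0 := by
    apply MvPolynomial.funext
    intro y
    rw [_root_.map_mul, map_zero]
    by_cases hy : Function.Injective y
    · apply mul_eq_zero_of_left
      rw [heval y]
      have hbval : ∀ i, i < N - 1 → ∀ j, j < N - 1 →
          (fun k => if h : k < n then y ⟨k, h⟩ else 0) i =
            (fun k => if h : k < n then y ⟨k, h⟩ else 0) j → i = j := by
        intro i hi j hj hij
        rw [← hn] at hi hj
        simp only [dif_pos hi, dif_pos hj] at hij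
        have := hy hij
        exact congrArg Fin.val this
      rw [detB1 N a _ hbval, ← hn]
      exact sub_self _
    · apply mul_eq_zero_of_right
      rw [hevalV y]
      rw [Function.not_injective_iff] at hy
      obtain ⟨i, j, hEq, hNe⟩ := hy
      rcases hNe.lt_or_gt with hlt | hlt
      · exact Finset.prod_eq_zero (Finset.mem_univ i)
          (Finset.prod_eq_zero (Finset.mem_Ioi.mpr hlt) (by rw [hEq, sub_self]))
      · exact Finset.prod_eq_zero (Finset.mem_univ j)
          (Finset.prod_eq_zero (Finset.mem_Ioi.mpr hlt) (by rw [hEq, sub_self]))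
  have hVne : V ≠ 0 := by
    intro h0
    have hev := congrArg (MvPolynomial.eval fun i : Fin n => ((i : ℕ) : ℂ)) h0
    rw [hevalV, map_zero] at hev
    have : (∏ i : Fin n, ∏ j ∈ Finset.Ioi i, (((j : ℕ) : ℂ) - ((i : ℕ) : ℂ))) ≠ 0 := by
      rw [Finset.prod_ne_zero_iff]
      intro i _
      rw [Finset.prod_ne_zero_iff]
      intro j hj
      have hij : i < j := Finset.mem_Ioi.mp hj
      refine sub_ne_zero.mpr fun h => ?_
      exact hij.ne' (Fin.ext (Nat.cast_inj.mp h))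
    exact this hev
  have hG0 : G = 0 := by
    rcases mul_eq_zero.mp hGV with h | h
    · exact h
    · exact absurd h hVne
  have hfin := heval fun i : Fin n => b (i : ℕ)
  rw [hG0, map_zero] at hfin
  have hb' : kC N a b = kC N a (fun k => if h : k < n then b (⟨k, h⟩ : Fin n) else 0) := by
    apply kC_congr
    intro k hk
    rw [← hn] at hk
    simp [dif_pos hk]
  have hprod : (∏ j ∈ Finset.range n, ∏ i ∈ Finset.range (j + 1),
      (a i - (if h : j < n then b ((⟨j, h⟩ : Fin n) : ℕ) else 0)))
      = ∏ j ∈ Finset.range n, ∏ i ∈ Finset.range (j + 1), (a i - b j) := by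
    refine Finset.prod_congr rfl fun j hj => ?_
    rw [Finset.mem_range] at hj
    simp [dif_pos hj]
  rw [hb']
  rw [hprod] at hfin
  linear_combination -hfin

lemma flip (N : ℕ) (x : Fin N → ℂ) :
    (∏ i : Fin N, ∏ j ∈ Finset.Ioi i, (x j - x i))
      = sgn N * ∏ i : Fin N, ∏ j ∈ Finset.Ioi i, (x i - x j) := by
  have h : ∀ i : Fin N, ∏ j ∈ Finset.Ioi i, (x j - x i)
      = (-1 : ℂ) ^ (N - 1 - (i : ℕ)) * ∏ j ∈ Finset.Ioi i, (x i - x j) := by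
    intro i
    rw [← Fin.card_Ioi i, ← Finset.prod_const, ← Finset.prod_mul_distrib]
    exact Finset.prod_congr rfl fun j _ => by ring
  rw [Finset.prod_congr rfl fun i _ => h i, Finset.prod_mul_distrib]
  congr 1
  rw [Finset.prod_pow_eq_pow_sum, sgn]
  congr 1
  rw [Fin.sum_univ_eq_sum_range (fun i => N - 1 - i) N]
  exact Finset.sum_range_reflect id N

end KrattAux

/-- Krattenthaler's determinant evaluation (0-based indexing: `x i`, `a k`, `b k`
denote `x_{i+1}`, `a_{k+1}`, `b_{k+1}` of the 1-based classical statement):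
`det[ ∏_{k=1}^{j-1}(x_i + a_k) ∏_{k=j}^{N-1}(x_i + b_k) ]_{i,j=1}^N
  = ∏_{1≤i<j≤N}(x_i - x_j) ∏_{1≤i≤j≤N-1}(a_i - b_j)`. -/
theorem krattenthaler_det (N : ℕ) (x : Fin N → ℂ) (a b : ℕ → ℂ) :
    (Matrix.of fun i j : Fin N =>
        (∏ k ∈ Finset.range (j : ℕ), (x i + a k)) *
          ∏ k ∈ Finset.Ico (j : ℕ) (N - 1), (x i + b k)).det
      = (∏ i : Fin N, ∏ j ∈ Finset.univ.filter (fun j : Fin N => i < j), (x i - x j)) *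
          ∏ j ∈ Finset.range (N - 1), ∏ i ∈ Finset.range (j + 1), (a i - b j) := by
  have h1 := KrattAux.detA N x a b
  rw [KrattAux.detB, KrattAux.flip] at h1
  have hfil : ∀ i : Fin N, Finset.univ.filter (fun j : Fin N => i < j) = Finset.Ioi i := by
    intro i; ext j; simp
  calc (Matrix.of fun i j : Fin N =>
        (∏ k ∈ Finset.range (j : ℕ), (x i + a k)) *
          ∏ k ∈ Finset.Ico (j : ℕ) (N - 1), (x i + b k)).det
      = (KrattAux.kM N x a b).det := rfl
    _ = _ := by
        rw [h1]
        simp only [hfil]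
        have := KrattAux.sgn_mul_self N
        calc _ = (KrattAux.sgn N * KrattAux.sgn N) *
              ((∏ i : Fin N, ∏ j ∈ Finset.Ioi i, (x i - x j)) *
                ∏ j ∈ Finset.range (N - 1), ∏ i ∈ Finset.range (j + 1), (a i - b j)) := by ring
          _ = _ := by rw [this]; ring
end

section
/- For a signature λ = (λ₁ ≥ … ≥ λ_N) of integers and complex z, w, the determinant det[ c(λ_i - i + j) ]_{i,j=1}^N with c(l) = Γ(1+z+w)/(Γ(1+z-l)Γ(1+w+l)) evaluates to ∏_{i=1}^N [Γ(z+w+i)Γ(i) / (Γ(z-λ_i+i)Γ(w+N+1+λ_i-i))] · ∏_{1≤i<j≤N} (λ_i-λ_j+j-i)/(j-i). -/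
open Matrix Finset

section Aux
open Polynomial

lemma inv_gamma_step (x : ℂ) : (Complex.Gamma x)⁻¹ = x * (Complex.Gamma (x+1))⁻¹ := by
  rcases eq_or_ne x 0 with h | h
  · simp [h, Complex.Gamma_zero]
  · rw [Complex.Gamma_add_one x h, mul_inv, ← mul_assoc, mul_inv_cancel₀ h, one_mul]

lemma inv_gamma_shift (x : ℂ) (m : ℕ) :
    (Complex.Gamma x)⁻¹ = (∏ k ∈ Finset.range m, (x + k)) * (Complex.Gamma (x + m))⁻¹ := by
  induction m with
  | zero => simp
  | succ m ih =>
    rw [Finset.prod_range_succ, ih, inv_gamma_step (x + m)]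
    push_cast
    rw [add_assoc]
    ring

lemma gamma_shift (x : ℂ) (hx : ∀ n : ℕ, x ≠ -n) (m : ℕ) :
    Complex.Gamma (x + m) = Complex.Gamma x * ∏ k ∈ Finset.range m, (x + k) := by
  have h1 : Complex.Gamma x ≠ 0 := Complex.Gamma_ne_zero hx
  have h2 : Complex.Gamma (x + m) ≠ 0 := by
    apply Complex.Gamma_ne_zero
    intro n hn
    apply hx (n + m)
    push_cast
    linear_combination hn
  have key := inv_gamma_shift x m
  field_simp at key
  linear_combination key

lemma det_eval {N : ℕ} (q : Fin N → Polynomial ℂ) (hq : ∀ j, (q j).natDegree < N)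
    (x : Fin N → ℂ) :
    Matrix.det (Matrix.of fun i j => (q j).eval (x i))
      = (∏ i : Fin N, ∏ j ∈ Finset.Ioi i, (x j - x i))
        * Matrix.det (Matrix.of fun m j : Fin N => (q j).coeff m) := by
  have h : (Matrix.of fun i j => (q j).eval (x i))
      = Matrix.vandermonde x * (Matrix.of fun m j : Fin N => (q j).coeff m) := by
    ext i j
    rw [Matrix.mul_apply]
    simp only [Matrix.of_apply, Matrix.vandermonde_apply]
    rw [Polynomial.eval_eq_sum_range' (hq j), ← Fin.sum_univ_eq_sum_range]
    exact Finset.sum_congr rfl fun m _ => (mul_comm _ _)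
  rw [h, Matrix.det_mul, Matrix.det_vandermonde]

end Aux

/-- For a signature `λ₁ ≥ … ≥ λ_N` of integers and complex `z, w` (such that no Gamma
factor in the denominators of the right-hand side is at a pole), the determinant
`det[c(λ_i - i + j)]` with `c(l) = Γ(1+z+w)/(Γ(1+z-l)Γ(1+w+l))` equals
`∏_i Γ(z+w+i)Γ(i)/(Γ(z-λ_i+i)Γ(w+N+1+λ_i-i)) · ∏_{i<j} (λ_i-λ_j+j-i)/(j-i)`
(1-based indexing in the classical formula; here `i : Fin N` is 0-based, so the
1-based index is `i+1`). -/
theorem det_fourier_coefficients (N : ℕ) (lam : Fin N → ℤ)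
    (hlam : ∀ i j : Fin N, i ≤ j → lam j ≤ lam i) (z w : ℂ)
    (hz : ∀ i : Fin N, ∀ n : ℕ, z - (lam i : ℂ) + ((i : ℕ) + 1 : ℂ) ≠ -(n : ℂ))
    (hw : ∀ i : Fin N, ∀ n : ℕ,
      w + (N : ℂ) + 1 + (lam i : ℂ) - ((i : ℕ) + 1 : ℂ) ≠ -(n : ℂ)) :
    (Matrix.of fun i j : Fin N =>
        Complex.Gamma (1 + z + w) /
          (Complex.Gamma (1 + z - ((lam i - (i : ℕ) + (j : ℕ) : ℤ) : ℂ)) *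
            Complex.Gamma (1 + w + ((lam i - (i : ℕ) + (j : ℕ) : ℤ) : ℂ)))).det
      = (∏ i : Fin N,
          Complex.Gamma (z + w + ((i : ℕ) + 1 : ℂ)) * Complex.Gamma ((i : ℕ) + 1 : ℂ) /
            (Complex.Gamma (z - (lam i : ℂ) + ((i : ℕ) + 1 : ℂ)) *
              Complex.Gamma (w + (N : ℂ) + 1 + (lam i : ℂ) - ((i : ℕ) + 1 : ℂ)))) *
        ∏ i : Fin N, ∏ j ∈ Finset.univ.filter (fun j : Fin N => i < j),
          (((lam i - lam j : ℤ) : ℂ) + (j : ℕ) - (i : ℕ)) / ((j : ℕ) - (i : ℕ)) := by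
  rcases Nat.eq_zero_or_pos N with hN0 | hN
  · subst hN0
    simp [Matrix.det_fin_zero]
  rcases em (∃ n : ℕ, 1 + z + w = -(n : ℂ)) with ⟨n, hn⟩ | hpole
  · -- pole case: both sides vanish
    have hg : Complex.Gamma (1 + z + w) = 0 := by
      rw [hn]; exact Complex.Gamma_neg_nat_eq_zero n
    have hLHS : (Matrix.of fun i j : Fin N =>
        Complex.Gamma (1 + z + w) /
          (Complex.Gamma (1 + z - ((lam i - (i : ℕ) + (j : ℕ) : ℤ) : ℂ)) *
            Complex.Gamma (1 + w + ((lam i - (i : ℕ) + (j : ℕ) : ℤ) : ℂ)))) = 0 := by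
      ext i j
      simp [hg]
    haveI : Nonempty (Fin N) := ⟨(⟨0, hN⟩ : Fin N)⟩
    rw [hLHS, Matrix.det_zero]
    symm
    apply mul_eq_zero_of_left
    apply Finset.prod_eq_zero (Finset.mem_univ (⟨0, hN⟩ : Fin N))
    have h0 : ((((⟨0, hN⟩ : Fin N) : ℕ) : ℂ)) = 0 := by norm_num
    rw [h0]
    have : z + w + ((0 : ℂ) + 1) = -(n : ℂ) := by linear_combination hn
    rw [this, Complex.Gamma_neg_nat_eq_zero n, zero_mul, zero_div]
  -- main case
  have hN1 : ((N - 1 : ℕ) : ℂ) = (N : ℂ) - 1 := by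
    rw [Nat.cast_sub hN]; norm_num
  set A : Fin N → ℂ := fun i => (lam i : ℂ) - (i : ℕ) with hA
  set u : Fin N → ℂ := fun i => z - (i : ℕ) with hu
  set q : Fin N → Polynomial ℂ := fun j =>
    (∏ k ∈ Finset.range (j : ℕ), (Polynomial.C (1 + z - (j : ℕ) + (k : ℕ)) - Polynomial.X)) *
    (∏ k ∈ Finset.range (N - 1 - (j : ℕ)),
      (Polynomial.C (1 + w + (j : ℕ) + (k : ℕ)) + Polynomial.X)) with hq_def
  have hqdeg : ∀ j : Fin N, (q j).natDegree < N := by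
    intro j
    simp only [hq_def]
    have hb1 : (∏ k ∈ Finset.range (j : ℕ),
        (Polynomial.C (1 + z - (j : ℕ) + (k : ℕ)) - Polynomial.X)).natDegree ≤ (j : ℕ) := by
      refine le_trans (Polynomial.natDegree_prod_le _ _) ?_
      calc ∑ k ∈ Finset.range (j : ℕ),
            (Polynomial.C (1 + z - (j : ℕ) + (k : ℕ)) - Polynomial.X).natDegree
          ≤ ∑ _k ∈ Finset.range (j : ℕ), 1 := by
            apply Finset.sum_le_sum
            intro k _
            refine le_trans (Polynomial.natDegree_sub_le _ _) ?_
            rw [Polynomial.natDegree_C, Polynomial.natDegree_X]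
            simp
        _ = (j : ℕ) := by simp
    have hb2 : (∏ k ∈ Finset.range (N - 1 - (j : ℕ)),
        (Polynomial.C (1 + w + (j : ℕ) + (k : ℕ)) + Polynomial.X)).natDegree
          ≤ N - 1 - (j : ℕ) := by
      refine le_trans (Polynomial.natDegree_prod_le _ _) ?_
      calc ∑ k ∈ Finset.range (N - 1 - (j : ℕ)),
            (Polynomial.C (1 + w + (j : ℕ) + (k : ℕ)) + Polynomial.X).natDegree
          ≤ ∑ _k ∈ Finset.range (N - 1 - (j : ℕ)), 1 := by
            apply Finset.sum_le_sum
            intro k _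
            refine le_trans (Polynomial.natDegree_add_le _ _) ?_
            rw [Polynomial.natDegree_C, Polynomial.natDegree_X]
            simp
        _ = N - 1 - (j : ℕ) := by simp
    have := j.isLt
    have := le_trans (Polynomial.natDegree_mul_le) (add_le_add hb1 hb2)
    omega
  have heval : ∀ (x : ℂ) (j : Fin N), (q j).eval x
      = (∏ k ∈ Finset.range (j : ℕ), (1 + z - (j : ℕ) + (k : ℕ) - x))
        * (∏ k ∈ Finset.range (N - 1 - (j : ℕ)), (1 + w + (j : ℕ) + (k : ℕ) + x)) := by
    intro x j
    simp [hq_def, Polynomial.eval_prod]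
  set D : Fin N → ℂ := fun i =>
    Complex.Gamma (1 + z + w) * (Complex.Gamma (1 + z - A i))⁻¹ *
      (Complex.Gamma (1 + w + A i + ((N - 1 : ℕ) : ℂ)))⁻¹ with hD
  have hmat : (Matrix.of fun i j : Fin N =>
      Complex.Gamma (1 + z + w) /
        (Complex.Gamma (1 + z - ((lam i - (i : ℕ) + (j : ℕ) : ℤ) : ℂ)) *
          Complex.Gamma (1 + w + ((lam i - (i : ℕ) + (j : ℕ) : ℤ) : ℂ))))
      = Matrix.of (fun i j : Fin N => D i * (q j).eval (A i)) := by
    ext i j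
    have hj1 : (j : ℕ) ≤ N - 1 := by have := j.isLt; omega
    have e1 : (1 + z - ((lam i - (i : ℕ) + (j : ℕ) : ℤ) : ℂ)) = 1 + z - A i - (j : ℕ) := by
      rw [hA]; push_cast; ring
    have e2 : (1 + w + ((lam i - (i : ℕ) + (j : ℕ) : ℤ) : ℂ)) = 1 + w + A i + (j : ℕ) := by
      rw [hA]; push_cast; ring
    have h1 := inv_gamma_shift (1 + z - A i - (j : ℕ)) (j : ℕ)
    rw [show (1 + z - A i - ((j : ℕ) : ℂ)) + ((j : ℕ) : ℂ) = 1 + z - A i by ring] at h1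
    have h2 := inv_gamma_shift (1 + w + A i + (j : ℕ)) (N - 1 - (j : ℕ))
    rw [show (1 + w + A i + ((j : ℕ) : ℂ)) + (((N - 1 - (j : ℕ) : ℕ)) : ℂ)
        = 1 + w + A i + ((N - 1 : ℕ) : ℂ) by rw [Nat.cast_sub hj1]; ring] at h2
    have p1 : ∏ k ∈ Finset.range (j : ℕ), (1 + z - A i - (j : ℕ) + (k : ℕ))
        = ∏ k ∈ Finset.range (j : ℕ), (1 + z - (j : ℕ) + (k : ℕ) - A i) :=
      Finset.prod_congr rfl fun k _ => by ring
    have p2 : ∏ k ∈ Finset.range (N - 1 - (j : ℕ)), (1 + w + A i + (j : ℕ) + (k : ℕ))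
        = ∏ k ∈ Finset.range (N - 1 - (j : ℕ)), (1 + w + (j : ℕ) + (k : ℕ) + A i) :=
      Finset.prod_congr rfl fun k _ => by ring
    simp only [Matrix.of_apply]
    rw [e1, e2, div_eq_mul_inv, mul_inv, h1, h2, p1, p2, heval, hD]
    ring
  rw [hmat]
  rw [show (Matrix.of fun i j : Fin N => D i * (q j).eval (A i))
      = Matrix.of (fun i j : Fin N =>
          D i * (Matrix.of fun i j : Fin N => (q j).eval (A i)) i j) from rfl,
    Matrix.det_mul_column]
  -- triangular evaluation at u
  have hdetU : Matrix.det (Matrix.of fun i j : Fin N => (q j).eval (u i))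
      = ∏ i : Fin N, (((i : ℕ).factorial : ℂ)
          * ∏ k ∈ Finset.range (N - 1 - (i : ℕ)), (1 + z + w + (k : ℕ))) := by
    have htri : (Matrix.of fun i j : Fin N => (q j).eval (u i)).BlockTriangular
        OrderDual.toDual := by
      intro i j hij
      have hij' : (i : ℕ) < (j : ℕ) := hij
      simp only [Matrix.of_apply]
      rw [heval]
      apply mul_eq_zero_of_left
      apply Finset.prod_eq_zero (Finset.mem_range.mpr (by omega :
        (j : ℕ) - (i : ℕ) - 1 < (j : ℕ)))
      have hc : (((j : ℕ) - (i : ℕ) - 1 : ℕ) : ℂ) = ((j : ℕ) : ℂ) - ((i : ℕ) : ℂ) - 1 := by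
        have h' : (j : ℕ) - (i : ℕ) - 1 = (j : ℕ) - ((i : ℕ) + 1) := by omega
        rw [h', Nat.cast_sub (by omega : (i : ℕ) + 1 ≤ (j : ℕ))]
        push_cast
        ring
      rw [hc, hu]
      ring
    rw [Matrix.det_of_lowerTriangular _ htri]
    apply Finset.prod_congr rfl
    intro i _
    simp only [Matrix.of_apply]
    rw [heval]
    congr 1
    · have p1 : ∏ k ∈ Finset.range (i : ℕ), (1 + z - (i : ℕ) + (k : ℕ) - u i)
          = ∏ k ∈ Finset.range (i : ℕ), ((k : ℂ) + 1) :=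
        Finset.prod_congr rfl fun k _ => by rw [hu]; ring
      rw [p1]
      rw [show ((i : ℕ).factorial : ℂ) = ((∏ k ∈ Finset.range (i : ℕ), (k + 1) : ℕ) : ℂ) by
        rw [Finset.prod_range_add_one_eq_factorial]]
      push_cast
      rfl
    · exact Finset.prod_congr rfl fun k _ => by rw [hu]; ring
  have hswap : Matrix.det (Matrix.of fun i j : Fin N => (q j).eval (A i))
      * (∏ i : Fin N, ∏ j ∈ Finset.Ioi i, (u j - u i))
      = Matrix.det (Matrix.of fun i j : Fin N => (q j).eval (u i))
        * (∏ i : Fin N, ∏ j ∈ Finset.Ioi i, (A j - A i)) := by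
    rw [det_eval q hqdeg A, det_eval q hqdeg u]
    ring
  have hVU : (∏ i : Fin N, ∏ j ∈ Finset.Ioi i, (u j - u i)) ≠ 0 := by
    rw [Finset.prod_ne_zero_iff]
    intro i _
    rw [Finset.prod_ne_zero_iff]
    intro j hj
    have hij0 : i < j := Finset.mem_Ioi.mp hj
    have hij : (i : ℕ) < (j : ℕ) := hij0
    rw [hu]
    intro h
    have : ((i : ℕ) : ℂ) = ((j : ℕ) : ℂ) := by linear_combination h
    exact absurd (Nat.cast_injective this) (by omega)
  have hfil : ∀ i : Fin N, Finset.univ.filter (fun j : Fin N => i < j) = Finset.Ioi i := by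
    intro i; ext j; simp
  have hpair : (∏ i : Fin N, ∏ j ∈ Finset.univ.filter (fun j : Fin N => i < j),
        (((lam i - lam j : ℤ) : ℂ) + (j : ℕ) - (i : ℕ)) / ((j : ℕ) - (i : ℕ)))
      = (∏ i : Fin N, ∏ j ∈ Finset.Ioi i, (A j - A i))
        / (∏ i : Fin N, ∏ j ∈ Finset.Ioi i, (u j - u i)) := by
    simp only [hfil]
    rw [← Finset.prod_div_distrib]
    apply Finset.prod_congr rfl
    intro i _
    rw [← Finset.prod_div_distrib]
    apply Finset.prod_congr rfl
    intro j _
    have h1 : A j - A i = -((((lam i - lam j : ℤ) : ℂ)) + (j : ℕ) - (i : ℕ)) := by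
      rw [hA]; push_cast; ring
    have h2 : u j - u i = -(((j : ℕ) : ℂ) - ((i : ℕ) : ℂ)) := by rw [hu]; ring
    rw [h1, h2, neg_div_neg_eq]
  -- core scalar identity
  have eC : ∀ i : Fin N, z - (lam i : ℂ) + ((i : ℕ) + 1 : ℂ) = 1 + z - A i := by
    intro i; rw [hA]; ring
  have eD2 : ∀ i : Fin N, w + (N : ℂ) + 1 + (lam i : ℂ) - ((i : ℕ) + 1 : ℂ)
      = 1 + w + A i + ((N - 1 : ℕ) : ℂ) := by
    intro i; rw [hA, hN1]; ring
  have hpole' : ∀ n : ℕ, (1 : ℂ) + z + w ≠ -(n : ℂ) := not_exists.mp hpole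
  have hcore : (∏ i : Fin N, D i)
      * (∏ i : Fin N, (((i : ℕ).factorial : ℂ)
          * ∏ k ∈ Finset.range (N - 1 - (i : ℕ)), (1 + z + w + (k : ℕ))))
      = ∏ i : Fin N,
          Complex.Gamma (z + w + ((i : ℕ) + 1 : ℂ)) * Complex.Gamma ((i : ℕ) + 1 : ℂ) /
            (Complex.Gamma (z - (lam i : ℂ) + ((i : ℕ) + 1 : ℂ)) *
              Complex.Gamma (w + (N : ℂ) + 1 + (lam i : ℂ) - ((i : ℕ) + 1 : ℂ))) := by
    have key : ∀ i : Fin N, D i * (((i : ℕ).factorial : ℂ)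
          * ∏ k ∈ Finset.range (N - 1 - (i : ℕ)), (1 + z + w + (k : ℕ)))
        = Complex.Gamma (1 + z + w + ((N - 1 - (i : ℕ) : ℕ) : ℂ))
          * (((i : ℕ).factorial : ℂ) * (Complex.Gamma (1 + z - A i))⁻¹
            * (Complex.Gamma (1 + w + A i + ((N - 1 : ℕ) : ℂ)))⁻¹) := by
      intro i
      rw [hD, gamma_shift (1 + z + w) hpole' (N - 1 - (i : ℕ))]
      ring
    have key2 : ∀ i : Fin N,
        Complex.Gamma (z + w + ((i : ℕ) + 1 : ℂ)) * Complex.Gamma ((i : ℕ) + 1 : ℂ) /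
            (Complex.Gamma (z - (lam i : ℂ) + ((i : ℕ) + 1 : ℂ)) *
              Complex.Gamma (w + (N : ℂ) + 1 + (lam i : ℂ) - ((i : ℕ) + 1 : ℂ)))
        = Complex.Gamma (z + w + ((i : ℕ) + 1 : ℂ))
          * (((i : ℕ).factorial : ℂ) * (Complex.Gamma (1 + z - A i))⁻¹
            * (Complex.Gamma (1 + w + A i + ((N - 1 : ℕ) : ℂ)))⁻¹) := by
      intro i
      rw [eC i, eD2 i, Complex.Gamma_nat_eq_factorial (i : ℕ), div_eq_mul_inv, mul_inv]
      ring
    have hGprod : (∏ i : Fin N, Complex.Gamma (1 + z + w + ((N - 1 - (i : ℕ) : ℕ) : ℂ)))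
        = ∏ i : Fin N, Complex.Gamma (z + w + ((i : ℕ) + 1 : ℂ)) := by
      rw [Fin.prod_univ_eq_prod_range
          (fun k => Complex.Gamma (1 + z + w + ((N - 1 - k : ℕ) : ℂ))) N,
        Fin.prod_univ_eq_prod_range (fun k => Complex.Gamma (z + w + ((k : ℕ) + 1 : ℂ))) N,
        Finset.prod_range_reflect (fun k => Complex.Gamma (1 + z + w + (k : ℕ))) N]
      apply Finset.prod_congr rfl
      intro k _
      congr 1
      ring
    calc (∏ i : Fin N, D i)
          * (∏ i : Fin N, (((i : ℕ).factorial : ℂ)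
              * ∏ k ∈ Finset.range (N - 1 - (i : ℕ)), (1 + z + w + (k : ℕ))))
        = ∏ i : Fin N, (Complex.Gamma (1 + z + w + ((N - 1 - (i : ℕ) : ℕ) : ℂ))
            * (((i : ℕ).factorial : ℂ) * (Complex.Gamma (1 + z - A i))⁻¹
              * (Complex.Gamma (1 + w + A i + ((N - 1 : ℕ) : ℂ)))⁻¹)) := by
          rw [← Finset.prod_mul_distrib]
          exact Finset.prod_congr rfl fun i _ => key i
      _ = (∏ i : Fin N, Complex.Gamma (1 + z + w + ((N - 1 - (i : ℕ) : ℕ) : ℂ)))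
            * ∏ i : Fin N, (((i : ℕ).factorial : ℂ) * (Complex.Gamma (1 + z - A i))⁻¹
              * (Complex.Gamma (1 + w + A i + ((N - 1 : ℕ) : ℂ)))⁻¹) :=
          Finset.prod_mul_distrib
      _ = (∏ i : Fin N, Complex.Gamma (z + w + ((i : ℕ) + 1 : ℂ)))
            * ∏ i : Fin N, (((i : ℕ).factorial : ℂ) * (Complex.Gamma (1 + z - A i))⁻¹
              * (Complex.Gamma (1 + w + A i + ((N - 1 : ℕ) : ℂ)))⁻¹) := by
          rw [hGprod]
      _ = ∏ i : Fin N, (Complex.Gamma (z + w + ((i : ℕ) + 1 : ℂ))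
            * (((i : ℕ).factorial : ℂ) * (Complex.Gamma (1 + z - A i))⁻¹
              * (Complex.Gamma (1 + w + A i + ((N - 1 : ℕ) : ℂ)))⁻¹)) :=
          Finset.prod_mul_distrib.symm
      _ = ∏ i : Fin N,
            Complex.Gamma (z + w + ((i : ℕ) + 1 : ℂ)) * Complex.Gamma ((i : ℕ) + 1 : ℂ) /
              (Complex.Gamma (z - (lam i : ℂ) + ((i : ℕ) + 1 : ℂ)) *
                Complex.Gamma (w + (N : ℂ) + 1 + (lam i : ℂ) - ((i : ℕ) + 1 : ℂ))) :=
          Finset.prod_congr rfl fun i _ => (key2 i).symm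
  -- assembly
  apply mul_right_cancel₀ hVU
  rw [mul_assoc, hswap, hdetU, hpair, mul_assoc, div_mul_cancel₀ _ hVU, ← mul_assoc, hcore]
end

section
/- Let (z, z') ∈ ℂ². The expression 1/(Γ(z-k+1)Γ(z'-k+1)) is nonnegative (real and ≥ 0) for all k ∈ ℤ if and only if either (i) z' = z̄ and z ∉ ℝ, or (ii) z, z' ∈ ℝ and there exists m ∈ ℤ with m < z, z' < m+1, or (iii) there is m ∈ ℤ with (z = m and z' ∈ ℝ, z' > m-1) or (z' = m and z ∈ ℝ, z > m-1). -/
/-!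
Write `F k = 1 / (Γ(z - k + 1) Γ(z' - k + 1))`. The recurrence of `1/Γ` gives
`F (k + 1) = (z - k) (z' - k) F k`, and `F k ≠ 0` once `k` lies to the left of `Re z + 1` and
`Re z' + 1`. If every `F k` is real, the monic quadratic `(X - z) (X - z')` therefore takes real
values at two integers, so its coefficients are real: `z' = z̄` or both are real.

For real `x ≤ y`, `F k > 0` as long as `k < x + 1`. If `x` is not an integer, the next step
multiplies by `(x - ⌊x⌋ - 1) (y - ⌊x⌋ - 1)`, whose first factor is negative, which forces
`y ≤ ⌊x⌋ + 1`. Conversely, in the complementary series all later factors are products of two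
nonpositive numbers, and in the degenerate series `F` vanishes from `k = m + 1` on, at the poles
of `Γ`.
-/

open Complex ComplexConjugate

theorem Real.Gamma_intCast_eq_zero_of_nonpos {n : ℤ} (hn : n ≤ 0) : Real.Gamma n = 0 := by
  obtain ⟨m, rfl⟩ := Int.exists_eq_neg_ofNat hn
  simpa using Real.Gamma_neg_nat_eq_zero m

theorem nonneg_of_succ_eq_mul {R : Type*} [MulZeroClass R] [Preorder R] [PosMulMono R]
    {g q : ℤ → R} (hg : ∀ k, g (k + 1) = q k * g k) {k₀ : ℤ}
    (h₀ : 0 ≤ g k₀) (hq : ∀ k, k₀ ≤ k → 0 ≤ q k) {k : ℤ} (hk : k₀ ≤ k) : 0 ≤ g k := by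
  induction k, hk using Int.leInduction with
  | base => exact h₀
  | succ k hk ih => rw [hg]; exact mul_nonneg (hq k hk) ih

theorem conj_or_real_of_im_mul_sub_eq_zero {z z' : ℂ} {s t : ℝ} (hst : s ≠ t)
    (hs : ((z - s) * (z' - s)).im = 0) (ht : ((z - t) * (z' - t)).im = 0) :
    z' = conj z ∨ (z.im = 0 ∧ z'.im = 0) := by
  simp only [mul_im, sub_re, sub_im, ofReal_re, ofReal_im, sub_zero] at hs ht
  have hsum : (s - t) * (z.im + z'.im) = 0 := by linear_combination ht - hs
  replace hsum : z'.im = -z.im := by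
    linarith [(mul_eq_zero.mp hsum).resolve_left (sub_ne_zero.mpr hst)]
  have hre : z.im * (z'.re - z.re) = 0 := by rw [hsum] at hs; linear_combination hs
  rcases mul_eq_zero.mp hre with h | h
  · exact Or.inr ⟨h, by rw [hsum, h, neg_zero]⟩
  · exact Or.inl (Complex.ext (by simp only [conj_re]; linarith) (by simp [hsum]))

noncomputable def invGammaPair (z z' : ℂ) (k : ℤ) : ℂ :=
  (Gamma (z - k + 1) * Gamma (z' - k + 1))⁻¹

theorem invGammaPair_succ (z z' : ℂ) (k : ℤ) :
    invGammaPair z z' (k + 1) = (z - k) * (z' - k) * invGammaPair z z' k := by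
  have (w : ℂ) : w - ↑(k + 1) + 1 = w - k := by push_cast; ring
  rw [invGammaPair, invGammaPair, this, this, mul_inv, mul_inv,
    one_div_Gamma_eq_self_mul_one_div_Gamma_add_one (z - k),
    one_div_Gamma_eq_self_mul_one_div_Gamma_add_one (z' - k)]
  ring

theorem invGammaPair_ne_zero {z z' : ℂ} {k : ℤ} (hz : (k : ℝ) < z.re + 1)
    (hz' : (k : ℝ) < z'.re + 1) : invGammaPair z z' k ≠ 0 :=
  inv_ne_zero <| mul_ne_zero (Gamma_ne_zero_of_re_pos (by simp; linarith))
    (Gamma_ne_zero_of_re_pos (by simp; linarith))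

theorem invGammaPair_conj (z : ℂ) (k : ℤ) :
    invGammaPair z (conj z) k = ((normSq (Gamma (z - k + 1)))⁻¹ : ℝ) := by
  have : conj z - k + 1 = conj (z - k + 1) := by simp
  rw [invGammaPair, this, Gamma_conj, mul_conj, ofReal_inv]

theorem conj_or_real_of_forall_invGammaPair_im_eq_zero {z z' : ℂ}
    (H : ∀ k, (invGammaPair z z' k).im = 0) : z' = conj z ∨ (z.im = 0 ∧ z'.im = 0) := by
  have hq (k : ℤ) (hz : k ≤ ⌊z.re⌋) (hz' : k ≤ ⌊z'.re⌋) :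
      ((z - (k : ℝ)) * (z' - (k : ℝ))).im = 0 := by
    have hne := invGammaPair_ne_zero (k := k) (z := z) (z' := z')
      (by linarith [Int.floor_le z.re, (Int.cast_le (R := ℝ)).mpr hz])
      (by linarith [Int.floor_le z'.re, (Int.cast_le (R := ℝ)).mpr hz'])
    rw [ofReal_intCast, eq_div_of_mul_eq hne (invGammaPair_succ z z' k).symm, div_im, H, H]
    simp
  set k₀ := min ⌊z.re⌋ ⌊z'.re⌋
  exact conj_or_real_of_im_mul_sub_eq_zero (s := (k₀ - 1 : ℤ)) (t := k₀) (by simp)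
    (hq _ (by omega) (by omega)) (hq _ (by omega) (by omega))

noncomputable def realInvGammaPair (x y : ℝ) (k : ℤ) : ℝ :=
  (Real.Gamma (x - k + 1) * Real.Gamma (y - k + 1))⁻¹

theorem invGammaPair_ofReal (x y : ℝ) (k : ℤ) :
    invGammaPair x y k = realInvGammaPair x y k := by
  have (w : ℝ) : (w : ℂ) - k + 1 = ((w - k + 1 : ℝ) : ℂ) := by push_cast; ring
  rw [invGammaPair, realInvGammaPair, this, this, Gamma_ofReal, Gamma_ofReal]
  push_cast
  rfl

theorem realInvGammaPair_succ (x y : ℝ) (k : ℤ) :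
    realInvGammaPair x y (k + 1) = (x - k) * (y - k) * realInvGammaPair x y k := by
  have := invGammaPair_succ x y k
  rw [invGammaPair_ofReal, invGammaPair_ofReal] at this
  exact_mod_cast this

theorem realInvGammaPair_comm (x y : ℝ) (k : ℤ) :
    realInvGammaPair x y k = realInvGammaPair y x k := by
  rw [realInvGammaPair, realInvGammaPair, mul_comm]

theorem realInvGammaPair_pos {x y : ℝ} {k : ℤ} (hx : (k : ℝ) < x + 1) (hy : (k : ℝ) < y + 1) :
    0 < realInvGammaPair x y k :=
  inv_pos.mpr <| mul_pos (Real.Gamma_pos_of_pos (by linarith))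
    (Real.Gamma_pos_of_pos (by linarith))

theorem realInvGammaPair_intCast_eq_zero {m k : ℤ} (y : ℝ) (hk : m < k) :
    realInvGammaPair m y k = 0 := by
  have : (m : ℝ) - k + 1 = ((m - k + 1 : ℤ) : ℝ) := by push_cast; ring
  rw [realInvGammaPair, this, Real.Gamma_intCast_eq_zero_of_nonpos (by omega), zero_mul, inv_zero]

theorem realInvGammaPair_nonneg_of_mem_Ioo {x y : ℝ} {m : ℤ} (hmx : (m : ℝ) < x)
    (hxm : x < m + 1) (hmy : (m : ℝ) < y) (hym : y < m + 1) (k : ℤ) :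
    0 ≤ realInvGammaPair x y k := by
  have hpos := realInvGammaPair_pos (x := x) (y := y) (k := m + 1)
    (by push_cast; linarith) (by push_cast; linarith)
  rcases le_total k (m + 1) with hk | hk
  · have : (k : ℝ) ≤ m + 1 := by exact_mod_cast hk
    exact (realInvGammaPair_pos (by linarith) (by linarith)).le
  · refine nonneg_of_succ_eq_mul (realInvGammaPair_succ x y) hpos.le (fun j hj => ?_) hk
    have : (m : ℝ) + 1 ≤ j := by exact_mod_cast hj
    exact mul_nonneg_of_nonpos_of_nonpos (by linarith) (by linarith)

theorem realInvGammaPair_intCast_nonneg {m : ℤ} {y : ℝ} (hy : (m : ℝ) - 1 < y) (k : ℤ) :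
    0 ≤ realInvGammaPair m y k := by
  rcases le_or_gt k m with hk | hk
  · have : (k : ℝ) ≤ m := by exact_mod_cast hk
    exact (realInvGammaPair_pos (by linarith) (by linarith)).le
  · exact (realInvGammaPair_intCast_eq_zero y hk).ge

theorem realInvGammaPair_nonneg_iff (x y : ℝ) :
    (∀ k, 0 ≤ realInvGammaPair x y k) ↔
      (∃ m : ℤ, (m : ℝ) < x ∧ x < m + 1 ∧ (m : ℝ) < y ∧ y < m + 1) ∨
        ∃ m : ℤ, (x = m ∧ (m : ℝ) - 1 < y) ∨ (y = m ∧ (m : ℝ) - 1 < x) := by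
  refine ⟨fun H => ?_, ?_⟩
  · wlog hxy : x ≤ y generalizing x y
    · have := this y x (fun k => realInvGammaPair_comm x y k ▸ H k) (le_of_not_ge hxy)
      aesop
    by_cases hx : ∃ m : ℤ, x = m
    · obtain ⟨m, rfl⟩ := hx
      exact Or.inr ⟨m, Or.inl ⟨rfl, by linarith⟩⟩
    push Not at hx
    set m := ⌊x⌋
    have hmx : (m : ℝ) < x := (Int.floor_le x).lt_of_ne (hx m).symm
    have hxm : x < m + 1 := Int.lt_floor_add_one x
    have hstep := H (m + 1 + 1)
    rw [realInvGammaPair_succ] at hstep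
    have hym : y ≤ m + 1 := by
      have := nonneg_of_mul_nonneg_left hstep
        (realInvGammaPair_pos (by push_cast; linarith) (by push_cast; linarith))
      push_cast at this
      nlinarith
    rcases hym.lt_or_eq with hym | rfl
    · exact Or.inl ⟨m, hmx, hxm, by linarith, hym⟩
    · exact Or.inr ⟨m + 1, Or.inr ⟨by push_cast; ring, by push_cast; linarith⟩⟩
  · rintro (⟨m, hmx, hxm, hmy, hym⟩ | ⟨m, ⟨rfl, hy⟩ | ⟨rfl, hx⟩⟩) k
    · exact realInvGammaPair_nonneg_of_mem_Ioo hmx hxm hmy hym k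
    · exact realInvGammaPair_intCast_nonneg hy k
    · exact realInvGammaPair_comm x m k ▸ realInvGammaPair_intCast_nonneg hx k

/-- For `(z, z') ∈ ℂ²`, the quantity `1/(Γ(z-k+1)Γ(z'-k+1))` is a nonnegative real for
every `k ∈ ℤ` if and only if `(z,z')` lies in the principal series (`z' = z̄`, `z ∉ ℝ`),
the complementary series (`z, z'` real, both in some interval `(m, m+1)` with `m ∈ ℤ`),
or the degenerate series (`z = m ∈ ℤ` with `z'` real, `z' > m-1`, or symmetrically). -/
theorem inv_gamma_pair_nonneg_iff (z z' : ℂ) :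
    (∀ k : ℤ, ∃ r : ℝ, 0 ≤ r ∧
        (Complex.Gamma (z - k + 1) * Complex.Gamma (z' - k + 1))⁻¹ = (r : ℂ))
      ↔ ((z' = (starRingEnd ℂ) z ∧ z.im ≠ 0) ∨
          (z.im = 0 ∧ z'.im = 0 ∧
            ∃ m : ℤ, (m : ℝ) < z.re ∧ z.re < m + 1 ∧ (m : ℝ) < z'.re ∧ z'.re < m + 1) ∨
          (∃ m : ℤ, (z = (m : ℂ) ∧ z'.im = 0 ∧ (m : ℝ) - 1 < z'.re) ∨
            (z' = (m : ℂ) ∧ z.im = 0 ∧ (m : ℝ) - 1 < z.re))) := by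
  change (∀ k : ℤ, ∃ r : ℝ, 0 ≤ r ∧ invGammaPair z z' k = r) ↔ _
  by_cases hreal : z.im = 0 ∧ z'.im = 0
  · obtain ⟨x, rfl⟩ := conj_eq_iff_real.mp (conj_eq_iff_im.mpr hreal.1)
    obtain ⟨y, rfl⟩ := conj_eq_iff_real.mp (conj_eq_iff_im.mpr hreal.2)
    simpa [invGammaPair_ofReal, ← ofReal_intCast] using realInvGammaPair_nonneg_iff x y
  · constructor
    · intro H
      have hconj := (conj_or_real_of_forall_invGammaPair_im_eq_zero fun k => by
        obtain ⟨r, -, hr⟩ := H k; simp [hr]).resolve_right hreal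
      exact Or.inl ⟨hconj, fun h => hreal ⟨h, by simp [hconj, h]⟩⟩
    · rintro (⟨rfl, -⟩ | ⟨hz, hz', -⟩ | ⟨m, ⟨rfl, hz', -⟩ | ⟨rfl, hz, -⟩⟩)
      · exact fun k => ⟨_, inv_nonneg.mpr (normSq_nonneg _), invGammaPair_conj z k⟩
      all_goals exact absurd ⟨by simp [*], by simp [*]⟩ hreal
end

section
/- For complex z, w with 2Re z + 2Re w + N > 0 and N ≥ 2, ∫_𝔻 |(1+D)^z (1+D̄)^w|² ν_N(dD) = Γ(N)Γ(N+z+z̄+w+w̄) / (Γ(N+z+w̄)Γ(N+z̄+w)), where ν_N(dD) = ((N-1)/π)(1-|D|²)^{N-2} ℓ(dD) is a probability measure on the closed unit disk 𝔻. -/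
open MeasureTheory Metric Complex Set Filter
open scoped Real Topology

noncomputable section

namespace DiskAux

lemma contOn_cpow_ofReal (s : ℂ) : ContinuousOn (fun t : ℝ => (t : ℂ) ^ s) (Ioi (0:ℝ)) := by
  intro t ht
  have h1 : ContinuousAt (fun z : ℂ => z ^ s) (t : ℂ) :=
    continuousAt_cpow_const (Or.inl (by simpa using ht))
  exact (h1.comp Complex.continuous_ofReal.continuousAt).continuousWithinAt

lemma norm_cpow_exp (s w : ℂ) {t : ℝ} (ht : 0 < t) :
    ‖(t : ℂ) ^ (s - 1) * Complex.exp (-(w * t))‖ =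
      t ^ (s.re - 1) * Real.exp (-w.re * t) := by
  rw [norm_mul,
    Complex.norm_cpow_eq_rpow_re_of_pos ht, Complex.norm_exp]
  have h1 : (-(w * (t:ℂ))).re = -w.re * t := by simp
  rw [h1, Complex.sub_re, Complex.one_re]

lemma cpow_exp_integrable (s w : ℂ) (hs : 0 < s.re) (hw : 0 < w.re) :
    IntegrableOn (fun t : ℝ => (t : ℂ) ^ (s - 1) * Complex.exp (-(w * t))) (Ioi 0) := by
  have h := integrableOn_rpow_mul_exp_neg_mul_rpow (p := 1) (s := s.re - 1) (b := w.re)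
    (by linarith) zero_lt_one hw
  simp_rw [Real.rpow_one] at h
  refine h.mono' ?_ ?_
  · refine ((contOn_cpow_ofReal (s - 1)).mul ?_).aestronglyMeasurable measurableSet_Ioi
    exact (Complex.continuous_exp.comp
      ((continuous_const.mul Complex.continuous_ofReal).neg : Continuous fun t : ℝ => -(w * (t:ℂ)))).continuousOn
  · refine (ae_restrict_iff' measurableSet_Ioi).2 (Filter.Eventually.of_forall fun t ht => ?_)
    rw [norm_cpow_exp s w ht]

lemma gamma_integral_cexp (s : ℂ) (hs : 0 < s.re) {w : ℂ} (hw : 0 < w.re) :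
    ∫ t : ℝ in Ioi 0, (t : ℂ) ^ (s - 1) * Complex.exp (-(w * t)) =
      Complex.Gamma s * w ^ (-s) := by
  set U : Set ℂ := {w : ℂ | 0 < w.re} with hU
  have hUo : IsOpen U := isOpen_lt continuous_const Complex.continuous_re
  have hUc : IsPreconnected U := (convex_halfSpace_re_gt 0).isPreconnected
  set G : ℂ → ℂ := fun w => ∫ t : ℝ in Ioi 0, (t : ℂ) ^ (s - 1) * Complex.exp (-(w * t))
    with hGdef
  set H : ℂ → ℂ := fun w => Complex.Gamma s * w ^ (-s) with hHdef
  have hmem : ∀ {x : ℂ}, x ∈ U → 0 < x.re := fun hx => hx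
  -- differentiability of G
  have hGdiff : ∀ w ∈ U, DifferentiableAt ℂ G w := by
    intro w hw
    have hw' : 0 < w.re := hw
    set ε : ℝ := w.re / 2 with hε
    have hε0 : 0 < ε := by positivity
    have key := hasDerivAt_integral_of_dominated_loc_of_deriv_le
      (μ := volume.restrict (Ioi (0:ℝ))) (x₀ := w)
      (F := fun (x : ℂ) (t : ℝ) => (t : ℂ) ^ (s - 1) * Complex.exp (-(x * t)))
      (F' := fun (x : ℂ) (t : ℝ) => (t : ℂ) ^ (s - 1) * (Complex.exp (-(x * t)) * (-t)))
      (bound := fun t : ℝ => t ^ s.re * Real.exp (-ε * t)) (Metric.ball_mem_nhds w hε0)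
      ?_ ?_ ?_ ?_ ?_ ?_
    · exact key.2.differentiableAt
    · filter_upwards with x
      exact ((contOn_cpow_ofReal (s - 1)).mul (Complex.continuous_exp.comp
        ((continuous_const.mul Complex.continuous_ofReal).neg : Continuous fun t : ℝ => -(x * (t:ℂ)))).continuousOn).aestronglyMeasurable
        measurableSet_Ioi
    · exact cpow_exp_integrable s w hs hw'
    · refine (((contOn_cpow_ofReal (s - 1)).mul ((Complex.continuous_exp.comp
        ((continuous_const.mul Complex.continuous_ofReal).neg : Continuous fun t : ℝ => -(w * (t:ℂ)))).continuousOn.mul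
        Complex.continuous_ofReal.continuousOn.neg)).aestronglyMeasurable measurableSet_Ioi)
    · refine (ae_restrict_iff' measurableSet_Ioi).2 (Filter.Eventually.of_forall fun t ht => ?_)
      intro x hx
      have hxre : ε < x.re := by
        have : |x.re - w.re| ≤ dist x w := by
          rw [Complex.dist_eq]
          simpa using Complex.abs_re_le_norm (x - w)
        have hd : dist x w < ε := mem_ball.1 hx
        have := abs_lt.1 (lt_of_le_of_lt this hd)
        simp only [hε] at *
        linarith [this.1]
      have ht' : (0:ℝ) < t := ht
      rw [norm_mul, norm_mul,
        Complex.norm_cpow_eq_rpow_re_of_pos ht', Complex.norm_exp]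
      have h1 : (-(x * (t:ℂ))).re = -x.re * t := by simp
      rw [h1]
      have h2 : ‖(-(t:ℝ) : ℂ)‖ = t := by
        simp [abs_of_pos ht']
      calc t ^ (s.re - 1) * (Real.exp (-x.re * t) * ‖-(t:ℂ)‖)
          = t ^ (s.re - 1) * t * Real.exp (-x.re * t) := by rw [h2]; ring
        _ = t ^ s.re * Real.exp (-x.re * t) := by
            rw [← Real.rpow_add_one (ne_of_gt ht') (s.re - 1)]; ring_nf
        _ ≤ t ^ s.re * Real.exp (-ε * t) := by
            have : Real.exp (-x.re * t) ≤ Real.exp (-ε * t) :=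
              Real.exp_le_exp.2 (by nlinarith)
            exact mul_le_mul_of_nonneg_left this (Real.rpow_nonneg ht'.le _)
    · have h := integrableOn_rpow_mul_exp_neg_mul_rpow (p := 1) (s := s.re) (b := ε)
        (by linarith) zero_lt_one hε0
      simpa [Real.rpow_one, IntegrableOn] using h
    · refine (ae_restrict_iff' measurableSet_Ioi).2 (Filter.Eventually.of_forall fun t ht => ?_)
      intro x hx
      have : HasDerivAt (fun x : ℂ => -(x * t)) (-(t:ℂ)) x := by
        exact (hasDerivAt_mul_const (t:ℂ)).neg
      exact (this.cexp).const_mul _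
  have hGd : DifferentiableOn ℂ G U := fun w hw => (hGdiff w hw).differentiableWithinAt
  have hG : AnalyticOnNhd ℂ G U := hGd.analyticOnNhd hUo
  have hH : AnalyticOnNhd ℂ H U := by
    refine DifferentiableOn.analyticOnNhd (fun x hx => ?_) hUo
    have hx' : x ∈ Complex.slitPlane := Or.inl (hmem hx)
    exact (((Complex.hasStrictDerivAt_cpow_const hx').hasDerivAt).differentiableAt.const_mul
      _).differentiableWithinAt
  have h1U : (1:ℂ) ∈ U := by simp [hU]
  have hfreq : ∃ᶠ z in 𝓝[≠] (1:ℂ), G z = H z := by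
    have htt : Tendsto (fun n : ℕ => ((1 + 1/(n+1) : ℝ) : ℂ)) atTop (𝓝[≠] (1:ℂ)) := by
      rw [tendsto_nhdsWithin_iff]
      constructor
      · have h0 : Tendsto (fun n : ℕ => (1 + 1/((n:ℝ)+1))) atTop (𝓝 (1+0)) :=
          tendsto_const_nhds.add tendsto_one_div_add_atTop_nhds_zero_nat
        rw [add_zero] at h0
        have h2 := (Complex.continuous_ofReal.tendsto (1:ℝ)).comp h0
        simp only [Function.comp_def] at h2
        simpa using h2
      · filter_upwards with n
        simp only [mem_compl_iff, mem_singleton_iff]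
        intro hcontra
        have : (1 + 1/(n+1) : ℝ) = 1 := by exact_mod_cast hcontra
        have hpos : (0:ℝ) < 1/(n+1) := by positivity
        linarith
    refine htt.frequently (Filter.Eventually.of_forall fun n => ?_).frequently
    have hr : (0:ℝ) < 1 + 1/(n+1) := by positivity
    have := integral_cpow_mul_exp_neg_mul_Ioi hs hr
    simp only [hGdef, hHdef]
    rw [this]
    have harg : ((1 + 1/(n+1) : ℝ) : ℂ).arg ≠ Real.pi := by
      rw [Complex.arg_ofReal_of_nonneg hr.le]
      exact Real.pi_ne_zero.symm
    rw [one_div, ← Complex.ofReal_inv]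
    rw [show ((((1 + 1/(n+1):ℝ))⁻¹ : ℝ) : ℂ) = (((1 + 1/(n+1):ℝ) : ℂ))⁻¹ by push_cast; ring]
    rw [Complex.inv_cpow _ _ harg, ← Complex.cpow_neg]
    ring
  have := hG.eqOn_of_preconnected_of_frequently_eq hH hUc h1U hfreq
  exact this hw

end DiskAux

open MeasureTheory Metric Complex Set Filter
open scoped Real Topology FourierTransform RealInnerProductSpace
noncomputable section
namespace DiskAux

/-- `1 + x i` as a complex number. -/
def wf (x : ℝ) : ℂ := 1 + (x:ℂ) * I

lemma wf_re (x : ℝ) : (wf x).re = 1 := by simp [wf]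
lemma wf_ne_zero (x : ℝ) : wf x ≠ 0 := by
  intro h; have := congrArg Complex.re h; rw [wf_re] at this; simp at this

/-- The one-sided Gamma kernel. -/
def gk (c : ℂ) : ℝ → ℂ := (Ioi (0:ℝ)).indicator fun t => (t:ℂ) ^ (c - 1) * Complex.exp (-t)

lemma gk_integrable (c : ℂ) (hc : 0 < c.re) : Integrable (gk c) := by
  refine IntegrableOn.integrable_indicator ?_ measurableSet_Ioi
  have := cpow_exp_integrable c 1 hc (by norm_num)
  simpa using this

lemma norm_wf_cpow_le (c : ℂ) (hc : 0 < c.re) (x : ℝ) :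
    ‖wf x ^ (-c)‖ ≤ Real.exp (π*|c.im|) * 2^c.re * (1+|x|)^(-c.re) := by
  have hz := wf_ne_zero x
  have habs : ‖wf x‖ = Real.sqrt (1 + x^2) := by
    have : wf x = ((1:ℝ):ℂ) + (x:ℝ)*I := by rw [wf]; push_cast; ring
    rw [this, Complex.norm_add_mul_I]
    norm_num
  have hlow : (1+|x|)/2 ≤ ‖wf x‖ := by
    rw [habs]
    rw [show (1+|x|)/2 = Real.sqrt (((1+|x|)/2)^2) by
      rw [Real.sqrt_sq (by positivity)]]
    apply Real.sqrt_le_sqrt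
    have : |x|^2 = x^2 := sq_abs x
    nlinarith [abs_nonneg x]
  have hpos : (0:ℝ) < (1+|x|)/2 := by positivity
  rw [Complex.norm_cpow_of_ne_zero hz]
  have h1 : ‖wf x‖ ^ (-c).re ≤ ((1+|x|)/2) ^ (-c.re) := by
    rw [Complex.neg_re, Real.rpow_neg (by positivity), Real.rpow_neg hpos.le]
    apply inv_anti₀ (Real.rpow_pos_of_pos hpos _)
    exact Real.rpow_le_rpow hpos.le hlow hc.le
  have h2 : Real.exp ((wf x).arg * (-c).im) ≥ Real.exp (-(π*|c.im|)) := by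
    apply Real.exp_le_exp.2
    have := Complex.abs_arg_le_pi (wf x)
    have h3 : |(wf x).arg * (-c).im| ≤ π * |c.im| := by
      rw [abs_mul]
      apply mul_le_mul this (by simp) (abs_nonneg _) Real.pi_nonneg
    linarith [abs_le.1 h3]
  calc ‖wf x‖ ^ (-c).re / Real.exp ((wf x).arg * (-c).im)
      ≤ ((1+|x|)/2) ^ (-c.re) / Real.exp (-(π*|c.im|)) := by
        apply div_le_div₀ (by positivity) h1 (Real.exp_pos _) h2
    _ = Real.exp (π*|c.im|) * 2^c.re * (1+|x|)^(-c.re) := by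
        rw [Real.div_rpow (by positivity) (by norm_num), Real.exp_neg,
          Real.rpow_neg (by norm_num : (0:ℝ) ≤ 2)]
        field_simp

lemma fourier_gk (c : ℂ) (hc : 0 < c.re) (ξ : ℝ) :
    𝓕 (gk c) ξ = Complex.Gamma c * (wf (2*π*ξ)) ^ (-(c)) := by
  rw [Real.fourier_real_eq]
  have hw : (0:ℝ) < (wf (2*π*ξ)).re := by rw [wf_re]; norm_num
  have key := gamma_integral_cexp c hc hw
  rw [← key]
  rw [show (fun v : ℝ => (𝐞 (-(v * ξ)) : Circle) • gk c v) =
      (Ioi (0:ℝ)).indicator (fun v : ℝ =>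
        (v:ℂ) ^ (c-1) * Complex.exp (-((wf (2*π*ξ)) * v))) from ?_]
  · rw [integral_indicator measurableSet_Ioi]
  · funext v
    rw [gk]
    by_cases hv : v ∈ Ioi (0:ℝ)
    · rw [indicator_of_mem hv, indicator_of_mem hv, Circle.smul_def, Real.fourierChar_apply,
        smul_eq_mul, mul_comm, mul_assoc]
      congr 1
      rw [← Complex.exp_add, wf]
      congr 1
      push_cast
      ring
    · rw [indicator_of_notMem hv, indicator_of_notMem hv, smul_zero]

lemma fourier_gk_integrable (c : ℂ) (hc : 1 < c.re) : Integrable (𝓕 (gk c)) := by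
  have h0 : Integrable (fun x : ℝ => (1+‖x‖)^(-c.re)) :=
    integrable_one_add_norm (by simpa using hc)
  have h1 : Integrable (fun x : ℝ =>
      ‖Complex.Gamma c‖ * (Real.exp (π*|c.im|) * 2^c.re * (1+|x|)^(-c.re))) := by
    simpa [Real.norm_eq_abs, mul_assoc] using
      ((h0.const_mul (Real.exp (π*|c.im|) * 2^c.re)).const_mul ‖Complex.Gamma c‖)
  refine h1.mono' ?_ ?_
  · have : 𝓕 (gk c) = fun ξ : ℝ => Complex.Gamma c * (wf (2*π*ξ)) ^ (-(c)) :=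
      funext (fourier_gk c (by linarith))
    rw [this]
    apply Continuous.aestronglyMeasurable
    apply continuous_const.mul
    rw [continuous_iff_continuousAt]
    intro x
    apply ContinuousAt.comp (x := x) (g := fun z : ℂ => z ^ (-c))
    · exact continuousAt_cpow_const (Or.inl (by rw [wf_re]; norm_num))
    · unfold wf; fun_prop
  · filter_upwards with ξ
    rw [fourier_gk c (by linarith), norm_mul]
    have hb := norm_wf_cpow_le c (by linarith) (2*π*ξ)
    have h2 : (1+|2*π*ξ|)^(-c.re) ≤ (1+|ξ|)^(-c.re) := by
      rw [Real.rpow_neg (by positivity), Real.rpow_neg (by positivity)]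
      apply inv_anti₀ (Real.rpow_pos_of_pos (by positivity) _)
      apply Real.rpow_le_rpow (by positivity) ?_ (by linarith)
      have hππ : (1:ℝ) ≤ |2*π| := by
        rw [abs_of_pos (by positivity)]; nlinarith [Real.pi_gt_three]
      calc (1:ℝ)+|ξ| = 1 + 1 * |ξ| := by ring
        _ ≤ 1 + |2 * π| * |ξ| := by
            have := mul_le_mul_of_nonneg_right hππ (abs_nonneg ξ); linarith
        _ = 1 + |2*π*ξ| := by rw [abs_mul (2*π) ξ]
    calc ‖Complex.Gamma c‖ * ‖(wf (2*π*ξ)) ^ (-c)‖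
        ≤ ‖Complex.Gamma c‖ * (Real.exp (π*|c.im|) * 2^c.re * (1+|2*π*ξ|)^(-c.re)) :=
          mul_le_mul_of_nonneg_left hb (norm_nonneg _)
      _ ≤ ‖Complex.Gamma c‖ * (Real.exp (π*|c.im|) * 2^c.re * (1+|ξ|)^(-c.re)) := by
          apply mul_le_mul_of_nonneg_left ?_ (norm_nonneg _)
          exact mul_le_mul_of_nonneg_left h2 (by positivity)

lemma Gamma_ne_zero_of_re_pos {c : ℂ} (hc : 0 < c.re) : Complex.Gamma c ≠ 0 := by
  apply Complex.Gamma_ne_zero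
  intro m hm
  have := congrArg Complex.re hm
  simp only [Complex.neg_re, Complex.natCast_re] at this
  have h2 : (0:ℝ) ≤ m := Nat.cast_nonneg m
  linarith

lemma fourier_inversion_gk (c : ℂ) (hc : 1 < c.re) {t : ℝ} (ht : 0 < t) :
    ∫ ξ : ℝ, Complex.exp (((2*π*ξ*t:ℝ):ℂ)*I) * (wf (2*π*ξ)) ^ (-c)
      = (t:ℂ)^(c-1) * Complex.exp (-t) / Complex.Gamma c := by
  have hgc : ContinuousAt (gk c) t := by
    have hev : (fun u : ℝ => (u:ℂ) ^ (c-1) * Complex.exp (-(u:ℂ))) =ᶠ[𝓝 t] gk c := by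
      filter_upwards [isOpen_Ioi.eventually_mem (show t ∈ Ioi (0:ℝ) from ht)] with u hu
      rw [gk, indicator_of_mem hu]
    refine ContinuousAt.congr ?_ hev
    refine ContinuousAt.mul ?_ ?_
    · exact (contOn_cpow_ofReal (c-1)).continuousAt (isOpen_Ioi.mem_nhds ht)
    · exact (Complex.continuous_exp.comp (Complex.continuous_ofReal.neg)).continuousAt
  have inv := (gk_integrable c (by linarith)).fourierInv_fourier_eq
    (fourier_gk_integrable c hc) hgc
  rw [Real.fourierInv_eq] at inv
  have hΓ : Complex.Gamma c ≠ 0 := Gamma_ne_zero_of_re_pos (by linarith)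
  have heq : (fun ξ : ℝ => (𝐞 (⟪ξ, t⟫) : Circle) • 𝓕 (gk c) ξ)
      = fun ξ : ℝ => Complex.Gamma c *
        (Complex.exp (((2*π*ξ*t:ℝ):ℂ)*I) * (wf (2*π*ξ)) ^ (-c)) := by
    funext ξ
    rw [fourier_gk c (by linarith), Circle.smul_def, Real.fourierChar_apply, smul_eq_mul]
    have hip : ⟪ξ, t⟫ = ξ * t := by simp [mul_comm]
    rw [hip]
    have hcst : ((2*π*(ξ*t):ℝ):ℂ) = ((2*π*ξ*t :ℝ):ℂ) := by push_cast; ring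
    rw [hcst]
    ring
  rw [heq, integral_const_mul] at inv
  have hgkt : gk c t = (t:ℂ)^(c-1) * Complex.exp (-t) := by
    rw [gk, indicator_of_mem (show t ∈ Ioi (0:ℝ) from ht)]
  rw [hgkt] at inv
  rw [eq_div_iff hΓ]
  rw [← inv]
  ring

end DiskAux

open MeasureTheory Metric Complex Set Filter
open scoped Real Topology
noncomputable section
namespace DiskAux

lemma wf_neg_re (x : ℝ) : (wf (-x)).re = 1 := wf_re (-x)

lemma integral_exp_mul_I_wf (c : ℂ) (hc : 1 < c.re) {t : ℝ} (ht : 0 < t) :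
    ∫ x : ℝ, Complex.exp (((x*t:ℝ):ℂ)*I) * (wf x)^(-c)
      = (2*π:ℝ) * ((t:ℂ)^(c-1) * Complex.exp (-t) / Complex.Gamma c) := by
  have hπ : (0:ℝ) < 2*π := by positivity
  have hcv := MeasureTheory.Measure.integral_comp_mul_left
    (fun x : ℝ => Complex.exp (((x*t:ℝ):ℂ)*I) * (wf x)^(-c)) (2*π)
  have hinv := fourier_inversion_gk c hc ht
  have heq : (fun x : ℝ => Complex.exp ((((2*π*x)*t:ℝ):ℂ)*I) * (wf (2*π*x))^(-c))
      = fun ξ : ℝ => Complex.exp (((2*π*ξ*t:ℝ):ℂ)*I) * (wf (2*π*ξ)) ^ (-c) := rfl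
  rw [heq] at hcv
  rw [hinv] at hcv
  rw [abs_of_pos (inv_pos.2 hπ)] at hcv
  have h2 := congrArg (fun z : ℂ => ((2*π:ℝ):ℂ) * z) hcv
  rw [real_smul, ← mul_assoc, ← Complex.ofReal_mul, mul_inv_cancel₀ hπ.ne',
    Complex.ofReal_one, one_mul] at h2
  exact h2.symm

/-- integrand for the double integral -/
def Jf (b c : ℂ) (x t : ℝ) : ℂ :=
  (t:ℂ)^(b-1) * Complex.exp (-(wf (-x) * t)) * (wf x)^(-c)

lemma Jf_integrable (b c : ℂ) (hb : 1 < b.re) (hc : 1 < c.re) :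
    Integrable (Function.uncurry (Jf b c)) (volume.prod (volume.restrict (Ioi 0))) := by
  have hmeas : AEStronglyMeasurable (Function.uncurry (Jf b c))
      (volume.prod (volume.restrict (Ioi 0))) := by
    apply Measurable.aestronglyMeasurable
    refine Measurable.mul (Measurable.mul ?_ ?_) ?_
    · have h : Measurable fun t : ℝ => (t:ℂ)^(b-1) := by fun_prop
      exact h.comp measurable_snd
    · apply Complex.measurable_exp.comp
      apply Measurable.neg
      refine Measurable.mul ?_ (Complex.measurable_ofReal.comp measurable_snd)
      have h : Measurable fun x : ℝ => wf (-x) := by unfold wf; fun_prop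
      exact h.comp measurable_fst
    · have h : Measurable fun x : ℝ => (wf x)^(-c) := by unfold wf; fun_prop
      exact h.comp measurable_fst
  have hbc : Integrable (fun z : ℝ × ℝ =>
      (Real.exp (π*|c.im|) * 2^c.re * (1+|z.1|)^(-c.re)) * (z.2 ^ (b.re-1) * Real.exp (-z.2)))
      (volume.prod (volume.restrict (Ioi 0))) := by
    have h2 : IntegrableOn (fun t : ℝ => t ^ (b.re-1) * Real.exp (-t)) (Ioi 0) := by
      have h := integrableOn_rpow_mul_exp_neg_mul_rpow (p := 1) (s := b.re - 1) (b := 1)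
        (by linarith) zero_lt_one one_pos
      simp_rw [Real.rpow_one, neg_one_mul] at h
      exact h
    exact Integrable.mul_prod
      (f := fun x : ℝ => Real.exp (π*|c.im|) * 2^c.re * (1+|x|)^(-c.re))
      (g := fun t : ℝ => t ^ (b.re-1) * Real.exp (-t))
      ((integrable_one_add_norm (by simpa using hc)).const_mul _) h2
  refine hbc.mono' hmeas ?_
  rw [show volume.prod (volume.restrict (Ioi (0:ℝ)))
      = (volume.prod volume).restrict (univ ×ˢ Ioi (0:ℝ)) by
    rw [← Measure.prod_restrict, Measure.restrict_univ]]
  refine (ae_restrict_iff' (MeasurableSet.univ.prod measurableSet_Ioi)).2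
    (Filter.Eventually.of_forall fun z hz => ?_)
  obtain ⟨-, ht⟩ := hz
  rw [mem_Ioi] at ht
  rcases z with ⟨x, t⟩
  simp only [Function.uncurry, Jf]
  rw [norm_mul, norm_mul]
  have h1 : ‖(t:ℂ)^(b-1)‖ = t ^ (b.re - 1) := by
    rw [Complex.norm_cpow_eq_rpow_re_of_pos ht, Complex.sub_re,
      Complex.one_re]
  have h2 : ‖Complex.exp (-(wf (-x) * t))‖ = Real.exp (-t) := by
    rw [Complex.norm_exp]
    congr 1
    have : (wf (-x) * t).re = t := by
      rw [Complex.mul_re]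
      simp [wf]
    simp [this]
  rw [h1, h2]
  have h3 : ‖(wf x)^(-c)‖ ≤ Real.exp (π*|c.im|) * 2^c.re * (1+|x|)^(-c.re) :=
    norm_wf_cpow_le c (by linarith) x
  calc t ^ (b.re-1) * Real.exp (-t) * ‖(wf x)^(-c)‖
      ≤ t ^ (b.re-1) * Real.exp (-t) * (Real.exp (π*|c.im|) * 2^c.re * (1+|x|)^(-c.re)) := by
        apply mul_le_mul_of_nonneg_left h3 (by positivity)
    _ = Real.exp (π*|c.im|) * 2^c.re * (1+|x|)^(-c.re) * (t ^ (b.re-1) * Real.exp (-t)) := by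
        ring

lemma integral_J (b c : ℂ) (hb : 1 < b.re) (hc : 1 < c.re) :
    ∫ x : ℝ, (wf (-x))^(-b) * (wf x)^(-c)
      = (2*π:ℝ) * Complex.Gamma (b+c-1) * (2:ℂ)^(-(b+c-1)) /
          (Complex.Gamma b * Complex.Gamma c) := by
  have hΓb : Complex.Gamma b ≠ 0 := Gamma_ne_zero_of_re_pos (by linarith)
  have hΓc : Complex.Gamma c ≠ 0 := Gamma_ne_zero_of_re_pos (by linarith)
  have step1 : ∀ x : ℝ, (wf (-x))^(-b) * (wf x)^(-c)
      = (Complex.Gamma b)⁻¹ * ∫ t : ℝ in Ioi 0, Jf b c x t := by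
    intro x
    have h := gamma_integral_cexp b (by linarith) (show 0 < (wf (-x)).re by rw [wf_neg_re]; norm_num)
    have : ∫ t : ℝ in Ioi 0, Jf b c x t
        = (∫ t : ℝ in Ioi 0, (t:ℂ)^(b-1) * Complex.exp (-(wf (-x) * t))) * (wf x)^(-c) := by
      unfold Jf
      rw [← integral_mul_const]
    rw [this, h]
    field_simp
  simp_rw [step1]
  rw [integral_const_mul]
  rw [integral_integral_swap (Jf_integrable b c hb hc)]
  have step2 : ∀ t ∈ Ioi (0:ℝ), (∫ x : ℝ, Jf b c x t)
      = (t:ℂ)^(b-1) * Complex.exp (-t) *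
          ((2*π:ℝ) * ((t:ℂ)^(c-1) * Complex.exp (-t) / Complex.Gamma c)) := by
    intro t ht
    rw [mem_Ioi] at ht
    have key := integral_exp_mul_I_wf c hc ht
    rw [← key, ← integral_const_mul]
    congr 1
    funext x
    simp only [Jf]
    rw [show -(wf (-x) * t) = -t + ((x*t:ℝ):ℂ)*I by rw [wf]; push_cast; ring]
    rw [Complex.exp_add]
    ring
  rw [setIntegral_congr_fun measurableSet_Ioi step2]
  have step3 : ∀ t ∈ Ioi (0:ℝ),
      (t:ℂ)^(b-1) * Complex.exp (-t) *
          ((2*π:ℝ) * ((t:ℂ)^(c-1) * Complex.exp (-t) / Complex.Gamma c))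
      = ((2*π:ℝ) / Complex.Gamma c) * ((t:ℂ)^(b+c-1-1) * Complex.exp (-((2:ℂ)*t))) := by
    intro t ht
    rw [mem_Ioi] at ht
    have ht' : (t:ℂ) ≠ 0 := by exact_mod_cast ht.ne'
    rw [show (t:ℂ)^(b+c-1-1) = (t:ℂ)^((b-1)+(c-1)) by congr 1; ring]
    rw [Complex.cpow_add _ _ ht']
    rw [show -((2:ℂ)*t) = -t + -t by ring, Complex.exp_add]
    field_simp
  rw [setIntegral_congr_fun measurableSet_Ioi step3]
  rw [integral_const_mul]
  rw [gamma_integral_cexp (b+c-1) (by simp [Complex.add_re, Complex.sub_re]; linarith)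
    (show (0:ℝ) < ((2:ℂ)).re by norm_num)]
  field_simp

end DiskAux

open MeasureTheory Metric Complex Set Filter
open scoped Real Topology
noncomputable section
namespace DiskAux

lemma wf_tan_cpow (e : ℂ) {θ : ℝ} (hθ : θ ∈ Ioo (-(π/2)) (π/2)) :
    (wf (Real.tan θ))^(-e) = (Real.cos θ : ℂ)^e * Complex.exp (-(e*θ*I)) := by
  have hcos : 0 < Real.cos θ := Real.cos_pos_of_mem_Ioo hθ
  have hcos' : (Real.cos θ : ℂ) ≠ 0 := by exact_mod_cast hcos.ne'
  have hcc : Complex.cos (θ:ℂ) ≠ 0 := by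
    rw [← Complex.ofReal_cos]; exact_mod_cast hcos.ne'
  have hwf : wf (Real.tan θ) = ((Real.cos θ)⁻¹ : ℝ) * Complex.exp ((θ:ℝ)*I) := by
    rw [Complex.exp_mul_I, ← Complex.ofReal_cos, ← Complex.ofReal_sin, wf,
      Real.tan_eq_sin_div_cos]
    push_cast
    field_simp [hcc]
  have hlog : Complex.log (wf (Real.tan θ)) = (-Real.log (Real.cos θ) : ℝ) + θ*I := by
    rw [hwf, Complex.log_ofReal_mul (by positivity) (Complex.exp_ne_zero _),
      Complex.log_exp (by simpa using by linarith [hθ.1, Real.pi_pos] : -π < ((θ:ℝ)*I).im)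
        (by simpa using by linarith [hθ.2, Real.pi_pos] : ((θ:ℝ)*I).im ≤ π),
      Real.log_inv]
  rw [Complex.cpow_def_of_ne_zero (wf_ne_zero _), hlog]
  rw [Complex.cpow_def_of_ne_zero hcos', ← Complex.ofReal_log hcos.le]
  rw [← Complex.exp_add]
  exact congrArg Complex.exp (by push_cast; ring)

lemma image_tan_Ioo : Real.tan '' (Ioo (-(π/2)) (π/2)) = univ := by
  apply eq_univ_of_forall
  intro y
  exact ⟨Real.arctan y, Real.arctan_mem_Ioo y, Real.tan_arctan y⟩

lemma cauchy_beta (M q : ℝ) (hM : 0 < M) :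
    ((∫ θ in Ioo (-(π/2)) (π/2), Real.cos θ ^ M * Real.exp (-(2*q*θ)) : ℝ) : ℂ)
    = (2*π:ℝ) * Complex.Gamma ((M:ℂ)+1) * (2:ℂ)^(-((M:ℂ)+1)) /
        (Complex.Gamma (((M/2+1 : ℝ):ℂ) + q*I) * Complex.Gamma (((M/2+1 : ℝ):ℂ) - q*I)) := by
  set b : ℂ := ((M/2+1 : ℝ):ℂ) + q*I with hbdef
  set c : ℂ := ((M/2+1 : ℝ):ℂ) - q*I with hcdef
  have hb : 1 < b.re := by simp [hbdef]; linarith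
  have hc : 1 < c.re := by simp [hcdef]; linarith
  have hbc : b + c - 1 = (M:ℂ) + 1 := by
    rw [hbdef, hcdef]; push_cast; ring
  have hsub : ∀ θ ∈ Ioo (-(π/2)) (π/2),
      |1/Real.cos θ^2| • ((wf (-(Real.tan θ)))^(-b) * (wf (Real.tan θ))^(-c))
        = ((Real.cos θ ^ M * Real.exp (-(2*q*θ)) : ℝ) : ℂ) := by
    intro θ hθ
    have hθ' : -θ ∈ Ioo (-(π/2)) (π/2) := by
      constructor <;> [linarith [hθ.2]; linarith [hθ.1]]
    have hcos : 0 < Real.cos θ := Real.cos_pos_of_mem_Ioo hθ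
    have hcos' : (Real.cos θ : ℂ) ≠ 0 := by exact_mod_cast hcos.ne'
    have h1 := wf_tan_cpow b hθ'
    rw [Real.tan_neg, Real.cos_neg] at h1
    have h2 := wf_tan_cpow c hθ
    rw [h1, h2]
    have he : Complex.exp (-(b*((-θ:ℝ):ℂ)*I)) * Complex.exp (-(c*(θ:ℝ)*I))
        = Complex.exp ((b-c)*θ*I) := by
      rw [← Complex.exp_add]
      congr 1
      push_cast
      ring
    have h3 : (Real.cos θ : ℂ)^b * Complex.exp (-(b*(-θ:ℝ)*I)) *
        ((Real.cos θ : ℂ)^c * Complex.exp (-(c*θ*I)))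
        = (Real.cos θ : ℂ)^(b+c) * Complex.exp ((b-c)*θ*I) := by
      rw [Complex.cpow_add b c hcos', ← he]
      ring
    rw [h3]
    have h4 : (Real.cos θ : ℂ)^(b+c) = ((Real.cos θ ^ (M+2) : ℝ) : ℂ) := by
      rw [show b + c = (((M+2 : ℝ)):ℂ) by rw [hbdef, hcdef]; push_cast; ring]
      rw [Complex.ofReal_cpow hcos.le]
    have h5 : (b-c)*θ*I = ((-(2*q*θ) : ℝ) : ℂ) := by
      rw [hbdef, hcdef]
      push_cast
      rw [show (↑M/2+1+↑q*I - (↑M/2+1-↑q*I) : ℂ) = 2*q*I by ring]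
      rw [show ((2:ℂ)*q*I)*θ*I = 2*q*θ*(I*I) by ring, Complex.I_mul_I]
      ring
    rw [h4, h5, ← Complex.ofReal_exp]
    rw [real_smul, ← Complex.ofReal_mul, ← Complex.ofReal_mul]
    congr 1
    rw [abs_of_pos (by positivity : (0:ℝ) < 1/Real.cos θ^2)]
    rw [show M + 2 = M + (2:ℕ) by norm_num, Real.rpow_add_natCast hcos.ne']
    field_simp
  have hderiv : ∀ θ ∈ Ioo (-(π/2)) (π/2),
      HasDerivWithinAt Real.tan (1/Real.cos θ^2) (Ioo (-(π/2)) (π/2)) θ :=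
    fun θ hθ => (Real.hasDerivAt_tan (Real.cos_pos_of_mem_Ioo hθ).ne').hasDerivWithinAt
  have himg := integral_image_eq_integral_abs_deriv_smul measurableSet_Ioo hderiv
    Real.injOn_tan (fun x => (wf (-x))^(-b) * (wf x)^(-c))
  rw [image_tan_Ioo] at himg
  rw [Measure.restrict_univ] at himg
  rw [integral_J b c hb hc, hbc] at himg
  calc ((∫ θ in Ioo (-(π/2)) (π/2), Real.cos θ ^ M * Real.exp (-(2*q*θ)) : ℝ) : ℂ)
      = ∫ θ in Ioo (-(π/2)) (π/2),
          ((Real.cos θ ^ M * Real.exp (-(2*q*θ)) : ℝ) : ℂ) := integral_ofReal.symm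
    _ = ∫ θ in Ioo (-(π/2)) (π/2),
          |1/Real.cos θ^2| • ((wf (-(Real.tan θ)))^(-b) * (wf (Real.tan θ))^(-c)) :=
        (setIntegral_congr_fun measurableSet_Ioo hsub).symm
    _ = _ := himg.symm

end DiskAux

open MeasureTheory Metric Complex Set Filter
open scoped Real Topology
noncomputable section
namespace DiskAux

lemma radial_integrableOn {A : ℝ} (hA : 0 < A) (m : ℕ) {c : ℝ} (hc : 0 < c) :
    IntegrableOn (fun r : ℝ => r ^ (A-1) * (c - r)^m) (Ioc 0 c) := by
  have h1 : IntegrableOn (fun r : ℝ => r ^ (A-1)) (Ioc 0 c) := by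
    have := intervalIntegral.intervalIntegrable_rpow' (a := 0) (b := c) (r := A-1)
      (by linarith)
    rwa [intervalIntegrable_iff_integrableOn_Ioc_of_le hc.le] at this
  refine ((h1.const_mul (c^m)).mono' ?_ ?_)
  · refine AEStronglyMeasurable.mul ?_ ?_
    · apply Measurable.aestronglyMeasurable; fun_prop
    · apply Measurable.aestronglyMeasurable; fun_prop
  · refine (ae_restrict_iff' measurableSet_Ioc).2 (Filter.Eventually.of_forall fun r hr => ?_)
    rw [Real.norm_eq_abs, abs_mul]
    rw [_root_.abs_of_nonneg (Real.rpow_nonneg hr.1.le _),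
      _root_.abs_of_nonneg (pow_nonneg (by linarith [hr.2] : (0:ℝ) ≤ c - r) m)]
    rw [mul_comm (c^m)]
    apply mul_le_mul_of_nonneg_left ?_ (Real.rpow_nonneg hr.1.le _)
    exact pow_le_pow_left₀ (by linarith [hr.2]) (by linarith [hr.1]) m

lemma radial_integral {A : ℝ} (hA : 0 < A) (m : ℕ) {c : ℝ} (hc : 0 < c) :
    ((∫ r in Ioc (0:ℝ) c, r ^ (A-1) * (c - r)^m : ℝ) : ℂ)
      = ((c ^ (A+m) : ℝ) : ℂ) * (Complex.Gamma (A:ℂ) * Complex.Gamma ((m:ℂ)+1) /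
          Complex.Gamma ((A:ℂ)+(m:ℂ)+1)) := by
  have hre : 0 < ((A:ℂ)).re := by simpa using hA
  have hre2 : 0 < ((m:ℂ)+1).re := by
    simp only [Complex.add_re, Complex.natCast_re, Complex.one_re]
    positivity
  have hre3 : 0 < ((A:ℂ)+((m:ℂ)+1)).re := by
    simp only [Complex.add_re, Complex.natCast_re, Complex.one_re, Complex.ofReal_re]
    positivity
  have hΓ : Complex.Gamma ((A:ℂ)+((m:ℂ)+1)) ≠ 0 := Gamma_ne_zero_of_re_pos hre3
  have hβ := Complex.Gamma_mul_Gamma_eq_betaIntegral hre hre2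
  have hscaled := Complex.betaIntegral_scaled (A:ℂ) ((m:ℂ)+1) hc
  have hcoe : ((∫ r in Ioc (0:ℝ) c, r ^ (A-1) * (c - r)^m : ℝ) : ℂ)
      = ∫ r in (0:ℝ)..c, (r:ℂ)^((A:ℂ)-1) * ((c:ℂ)-(r:ℂ))^(((m:ℂ)+1)-1) :=
    calc ((∫ r in Ioc (0:ℝ) c, r ^ (A-1) * (c - r)^m : ℝ) : ℂ)
        = ((∫ r in Ioo (0:ℝ) c, r ^ (A-1) * (c - r)^m : ℝ) : ℂ) := by
          rw [MeasureTheory.integral_Ioc_eq_integral_Ioo]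
      _ = ∫ r in Ioo (0:ℝ) c, ((r ^ (A-1) * (c - r)^m : ℝ) : ℂ) := integral_ofReal.symm
      _ = ∫ r in Ioo (0:ℝ) c, (r:ℂ)^((A:ℂ)-1) * ((c:ℂ)-(r:ℂ))^(((m:ℂ)+1)-1) := by
          apply setIntegral_congr_fun measurableSet_Ioo
          intro r hr
          simp only
          rw [show ((m:ℂ)+1)-1 = ((m:ℕ):ℂ) by ring, Complex.cpow_natCast]
          rw [Complex.ofReal_mul, Complex.ofReal_cpow hr.1.le]
          push_cast
          ring
      _ = ∫ r in Ioc (0:ℝ) c, (r:ℂ)^((A:ℂ)-1) * ((c:ℂ)-(r:ℂ))^(((m:ℂ)+1)-1) :=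
          (MeasureTheory.integral_Ioc_eq_integral_Ioo).symm
      _ = ∫ r in (0:ℝ)..c, (r:ℂ)^((A:ℂ)-1) * ((c:ℂ)-(r:ℂ))^(((m:ℂ)+1)-1) :=
          (intervalIntegral.integral_of_le hc.le).symm
  rw [hcoe, hscaled]
  rw [show (A:ℂ)+((m:ℂ)+1)-1 = (((A+m:ℝ)):ℂ) by push_cast; ring]
  rw [Complex.ofReal_cpow hc.le]
  congr 1
  rw [show (A:ℂ)+(m:ℂ)+1 = (A:ℂ)+((m:ℂ)+1) by ring]
  rw [eq_div_iff hΓ]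
  rw [mul_comm (Complex.betaIntegral _ _)]
  exact hβ.symm

/-- value of the inner radial integral, complex coerced -/
lemma inner_value (K e : ℝ) {A : ℝ} (hA : 0 < A) (m : ℕ) (c : ℝ) :
    ((∫ r in Ioi (0:ℝ),
        (Ioc (0:ℝ) c).indicator (fun r => K * e * (r ^ (A-1) * (c - r)^m)) r : ℝ) : ℂ)
      = ((K * e * (if 0 < c then c^(A+m) else 0) : ℝ) : ℂ) *
          (Complex.Gamma (A:ℂ) * Complex.Gamma ((m:ℂ)+1) / Complex.Gamma ((A:ℂ)+(m:ℂ)+1)) := by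
  rw [setIntegral_indicator measurableSet_Ioc,
    inter_eq_self_of_subset_right (Ioc_subset_Ioi_self)]
  by_cases hc : 0 < c
  · rw [if_pos hc, integral_const_mul, Complex.ofReal_mul, Complex.ofReal_mul,
      Complex.ofReal_mul, Complex.ofReal_mul]
    rw [radial_integral hA m hc]
    ring
  · rw [if_neg hc]
    rw [Ioc_eq_empty (by simpa using hc), Measure.restrict_empty, integral_zero_measure]
    norm_num

lemma integrable_slice (K e : ℝ) {A : ℝ} (hA : 0 < A) (m : ℕ) (c : ℝ) :
    Integrable (fun r : ℝ =>
        (Ioc (0:ℝ) c).indicator (fun r => K * e * (r ^ (A-1) * (c - r)^m)) r)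
      (volume.restrict (Ioi 0)) := by
  by_cases hc : 0 < c
  · exact (MeasureTheory.IntegrableOn.integrable_indicator
      ((radial_integrableOn hA m hc).const_mul (K*e)) measurableSet_Ioc).restrict
  · rw [Ioc_eq_empty (by simpa using hc)]
    simp [integrable_zero]

end DiskAux

open MeasureTheory Metric Complex Set Filter
open scoped Real Topology
noncomputable section
namespace DiskAux

/-- normalization constant -/
def Kc (N : ℕ) : ℝ := ((N:ℝ)-1)/π

def gD (N : ℕ) (a : ℂ) (D : ℂ) : ℝ :=
  ‖(1 + D) ^ a‖ ^ 2 * (Kc N * (1 - ‖D‖ ^ 2) ^ (N-2))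

def FD (N : ℕ) (a : ℂ) : ℂ → ℂ :=
  (closedBall (0:ℂ) 1).indicator (fun D => ((gD N a D : ℝ) : ℂ))

def φf (N : ℕ) (a : ℂ) (θ r : ℝ) : ℝ :=
  (Ioc (0:ℝ) (2*Real.cos θ)).indicator
    (fun r => Kc N * Real.exp (-(2*a.im*θ)) *
      (r ^ (2*a.re + N - 1) * (2*Real.cos θ - r)^(N-2))) r

lemma φf_nonneg (N : ℕ) (hN : 2 ≤ N) (a : ℂ) (θ r : ℝ) : 0 ≤ φf N a θ r := by
  rw [φf]
  by_cases hr : r ∈ Ioc (0:ℝ) (2*Real.cos θ)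
  · rw [indicator_of_mem hr]
    have h1 : (0:ℝ) ≤ Kc N := by
      rw [Kc]
      have h : (1:ℝ) ≤ (N:ℝ) := by exact_mod_cast Nat.one_le_of_lt hN
      exact div_nonneg (by linarith) Real.pi_pos.le
    have h2 : (0:ℝ) ≤ 2*Real.cos θ - r := by linarith [hr.2]
    have h3 : (0:ℝ) ≤ r ^ (2*a.re + N - 1) := Real.rpow_nonneg hr.1.le _
    positivity
  · rw [indicator_of_notMem hr]

lemma polar_pointwise (N : ℕ) (hN : 2 ≤ N) (a : ℂ) {r θ : ℝ}
    (hr : r ∈ Ioi (0:ℝ)) (hθ : θ ∈ Ioo (-π) π) :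
    r • FD N a (Complex.polarCoord.symm (r, θ) - 1) = ((φf N a θ r : ℝ) : ℂ) := by
  have hr0 : 0 < r := hr
  set E : ℂ := Complex.polarCoord.symm (r, θ) with hEdef
  have hE : E = (r:ℂ) * (Complex.cos θ + Complex.sin θ * I) := by
    rw [hEdef, Complex.polarCoord_symm_apply]
    push_cast
    ring
  have habs : ‖E‖ = r := by
    rw [hEdef, Complex.norm_polarCoord_symm]
    exact _root_.abs_of_pos hr0
  have hE0 : E ≠ 0 := by
    intro h
    rw [h] at habs
    simp at habs
    exact hr0.ne' habs.symm
  have harg : E.arg = θ := by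
    rw [hE]
    exact Complex.arg_mul_cos_add_sin_mul_I hr0 ⟨hθ.1, hθ.2.le⟩
  have habsD2 : ‖E - 1‖ ^ 2 = r^2 - 2*r*Real.cos θ + 1 := by
    have hE1 : E - 1 = ((r*Real.cos θ - 1 : ℝ):ℂ) + ((r*Real.sin θ : ℝ):ℂ)*I := by
      rw [hE, ← Complex.ofReal_cos, ← Complex.ofReal_sin]
      push_cast
      ring
    rw [hE1, Complex.sq_norm, Complex.normSq_add_mul_I]
    nlinarith [Real.sin_sq_add_cos_sq θ]
  have hmem : (E - 1 ∈ closedBall (0:ℂ) 1) ↔ r ∈ Ioc (0:ℝ) (2*Real.cos θ) := by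
    rw [mem_closedBall, dist_zero_right, mem_Ioc]
    constructor
    · intro hle
      refine ⟨hr0, ?_⟩
      have h2 : ‖E-1‖^2 ≤ 1 := by
        nlinarith [norm_nonneg (E-1)]
      rw [habsD2] at h2
      nlinarith
    · rintro ⟨-, hle⟩
      have h2 : ‖E-1‖^2 ≤ 1 := by
        rw [habsD2]; nlinarith
      nlinarith [norm_nonneg (E-1)]
  by_cases hin : r ∈ Ioc (0:ℝ) (2*Real.cos θ)
  · rw [FD, indicator_of_mem (hmem.2 hin), φf, indicator_of_mem hin]
    rw [real_smul, ← Complex.ofReal_mul]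
    congr 1
    rw [gD]
    rw [show (1:ℂ) + (E - 1) = E by ring]
    rw [Complex.norm_cpow_of_ne_zero hE0, habs, harg]
    have hCabs : ‖E - 1‖ ^ 2 = r^2 - 2*r*Real.cos θ + 1 := habsD2
    rw [hCabs]
    have hone : 1 - (r^2 - 2*r*Real.cos θ + 1) = r * (2*Real.cos θ - r) := by ring
    rw [hone]
    -- now pure real computation
    have hsplit : r ^ (2*a.re + (N:ℝ) - 1)
        = r ^ a.re * r ^ a.re * (r ^ ((N:ℝ)-2) * r) := by
      rw [← Real.rpow_add_one hr0.ne', ← Real.rpow_add hr0, ← Real.rpow_add hr0]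
      congr 1
      ring
    have hnat : r ^ (N-2:ℕ) = r ^ ((N:ℝ)-2) := by
      rw [← Real.rpow_natCast r (N-2), Nat.cast_sub hN]
      norm_num
    have hexp : Real.exp (-(2*a.im*θ)) = (Real.exp (θ*a.im) * Real.exp (θ*a.im))⁻¹ := by
      rw [← Real.exp_add, ← Real.exp_neg]
      congr 1
      ring
    rw [hsplit, hexp, mul_pow, hnat]
    rw [div_pow, pow_two, pow_two]
    field_simp
  · rw [FD, indicator_of_notMem (fun hcon => hin (hmem.1 hcon)), φf,
      indicator_of_notMem hin, smul_zero, Complex.ofReal_zero]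

end DiskAux

open MeasureTheory Metric Complex Set Filter
open scoped Real Topology
noncomputable section
namespace DiskAux

lemma Kc_nonneg {N : ℕ} (hN : 2 ≤ N) : 0 ≤ Kc N := by
  rw [Kc]
  have h : (1:ℝ) ≤ (N:ℝ) := by exact_mod_cast Nat.one_le_of_lt hN
  exact div_nonneg (by linarith) Real.pi_pos.le

lemma cast_sub_two {N : ℕ} (hN : 2 ≤ N) : ((N-2:ℕ):ℝ) = (N:ℝ) - 2 := by
  push_cast [Nat.cast_sub hN]
  norm_num

lemma disk_key (N : ℕ) (hN : 2 ≤ N) (a : ℂ) (h : 0 < 2*a.re + (N:ℝ)) :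
    ((∫ D in closedBall (0:ℂ) 1, gD N a D : ℝ) : ℂ)
      = Complex.Gamma (N:ℂ) * Complex.Gamma ((N:ℂ) + a + (starRingEnd ℂ) a) /
          (Complex.Gamma ((N:ℂ) + a) * Complex.Gamma ((N:ℂ) + (starRingEnd ℂ) a)) := by
  have hπ := Real.pi_pos
  have hcast := cast_sub_two hN
  have hN2 : (2:ℝ) ≤ (N:ℝ) := by exact_mod_cast hN
  set Mr : ℝ := 2*a.re + (N:ℝ) + ((N-2:ℕ):ℝ) with hMrdef
  have hMrval : Mr = 2*a.re + 2*(N:ℝ) - 2 := by rw [hMrdef, hcast]; ring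
  have hMrpos : 0 < Mr := by rw [hMrval]; linarith
  set Cr : ℝ := Real.Gamma (2*a.re + (N:ℝ)) * Real.Gamma (((N-2:ℕ):ℝ)+1) /
      Real.Gamma ((2*a.re + (N:ℝ)) + ((N-2:ℕ):ℝ)+1) with hCrdef
  have hCrC : ((Cr:ℝ):ℂ)
      = Complex.Gamma ((2*a.re + (N:ℝ) : ℝ):ℂ) * Complex.Gamma (((N-2:ℕ):ℂ)+1) /
          Complex.Gamma (((2*a.re + (N:ℝ) : ℝ):ℂ)+((N-2:ℕ):ℂ)+1) := by
    rw [hCrdef, Complex.ofReal_div, Complex.ofReal_mul, ← Complex.Gamma_ofReal,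
      ← Complex.Gamma_ofReal, ← Complex.Gamma_ofReal]
    congr 2 <;> push_cast <;> ring
  set μr := volume.restrict (Ioi (0:ℝ)) with hμr
  set μθ := volume.restrict (Ioo (-π) π) with hμθ
  -- measurability of the pair function
  have hmeaspair : AEStronglyMeasurable (fun z : ℝ×ℝ => ((φf N a z.2 z.1 : ℝ):ℂ))
      (μr.prod μθ) := by
    have heq : (fun z : ℝ×ℝ => φf N a z.2 z.1)
        = ({z : ℝ×ℝ | 0 < z.1 ∧ z.1 ≤ 2*Real.cos z.2}).indicator
            (fun z => Kc N * Real.exp (-(2*a.im*z.2)) *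
              (z.1 ^ (2*a.re + (N:ℝ) - 1) * (2*Real.cos z.2 - z.1)^(N-2))) := by
      funext z
      rw [φf, Set.indicator_apply, Set.indicator_apply]
      simp only [mem_Ioc, mem_setOf_eq]
    have hmeas : Measurable (fun z : ℝ×ℝ => φf N a z.2 z.1) := by
      rw [heq]
      apply Measurable.indicator
      · fun_prop
      · apply MeasurableSet.inter
        · exact measurableSet_lt measurable_const measurable_fst
        · exact measurableSet_le measurable_fst
            ((Real.continuous_cos.measurable.comp measurable_snd).const_mul 2)
    exact (Complex.measurable_ofReal.comp hmeas).aestronglyMeasurable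
  -- slice integrability
  have hslice : ∀ θ : ℝ, Integrable (fun r => ((φf N a θ r : ℝ):ℂ)) μr := by
    intro θ
    exact (integrable_slice (Kc N) (Real.exp (-(2*a.im*θ))) h (N-2) (2*Real.cos θ)).ofReal
  -- inner value (real form)
  have hvalReal : ∀ θ : ℝ, (∫ r, φf N a θ r ∂μr)
      = Kc N * Real.exp (-(2*a.im*θ)) *
          (if 0 < 2*Real.cos θ then (2*Real.cos θ)^Mr else 0) * Cr := by
    intro θ
    have h2 := inner_value (Kc N) (Real.exp (-(2*a.im*θ))) h (N-2) (2*Real.cos θ)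
    rw [← hCrC, ← Complex.ofReal_mul] at h2
    rw [hμr]
    simp only [φf]
    exact_mod_cast h2
  have hval : ∀ θ : ℝ, (∫ r, ((φf N a θ r : ℝ):ℂ) ∂μr)
      = ((Kc N * Real.exp (-(2*a.im*θ)) *
          (if 0 < 2*Real.cos θ then (2*Real.cos θ)^Mr else 0) * Cr : ℝ) : ℂ) := by
    intro θ
    calc (∫ r, ((φf N a θ r : ℝ):ℂ) ∂μr) = ((∫ r, φf N a θ r ∂μr : ℝ) : ℂ) := integral_ofReal
      _ = _ := by rw [hvalReal θ]
  have hnorm : ∀ θ : ℝ, (∫ r, ‖((φf N a θ r : ℝ):ℂ)‖ ∂μr)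
      = Kc N * Real.exp (-(2*a.im*θ)) *
          (if 0 < 2*Real.cos θ then (2*Real.cos θ)^Mr else 0) * Cr := by
    intro θ
    have h1 : (fun r => ‖((φf N a θ r : ℝ):ℂ)‖) = fun r => φf N a θ r := by
      funext r
      rw [Complex.norm_real, Real.norm_eq_abs, _root_.abs_of_nonneg (φf_nonneg N hN a θ r)]
    rw [h1, hvalReal θ]
  -- integrability in θ of the norm integral
  have hFinθ : IsFiniteMeasure μθ := by
    constructor
    rw [hμθ, Measure.restrict_apply_univ]
    exact measure_Ioo_lt_top
  have hintθ : Integrable (fun θ => ∫ r, ‖((φf N a θ r : ℝ):ℂ)‖ ∂μr) μθ := by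
    have hbd : ∀ᵐ θ ∂μθ, ‖∫ r, ‖((φf N a θ r : ℝ):ℂ)‖ ∂μr‖
        ≤ Kc N * Real.exp (2 * |a.im| * π) * 2^Mr * |Cr| := by
      rw [hμθ]
      refine (ae_restrict_iff' measurableSet_Ioo).2 (Filter.Eventually.of_forall fun θ hθ => ?_)
      rw [hnorm θ, Real.norm_eq_abs]
      rw [abs_mul, abs_mul, abs_mul]
      rw [_root_.abs_of_nonneg (Kc_nonneg hN), Real.abs_exp]
      have he : Real.exp (-(2*a.im*θ)) ≤ Real.exp (2 * |a.im| * π) := by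
        apply Real.exp_le_exp.2
        calc -(2*a.im*θ) ≤ |2*a.im*θ| := neg_le_abs _
          _ = 2 * |a.im| * |θ| := by rw [abs_mul, abs_mul]; norm_num
          _ ≤ 2 * |a.im| * π := by
              apply mul_le_mul_of_nonneg_left ?_ (by positivity)
              rw [abs_le]
              exact ⟨hθ.1.le, hθ.2.le⟩
      have hite : |(if 0 < 2*Real.cos θ then (2*Real.cos θ)^Mr else 0 : ℝ)| ≤ 2^Mr := by
        by_cases hc : 0 < 2*Real.cos θ
        · rw [if_pos hc, _root_.abs_of_nonneg (Real.rpow_nonneg hc.le _)]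
          apply Real.rpow_le_rpow hc.le ?_ hMrpos.le
          nlinarith [Real.cos_le_one θ]
        · rw [if_neg hc]
          simp only [abs_zero]
          positivity
      have hKc0 := Kc_nonneg hN
      calc Kc N * Real.exp (-(2*a.im*θ)) * |(if 0 < 2*Real.cos θ then (2*Real.cos θ)^Mr else 0 : ℝ)|
            * |Cr|
          ≤ Kc N * Real.exp (-(2*a.im*θ)) * 2^Mr * |Cr| := by
            apply mul_le_mul_of_nonneg_right ?_ (abs_nonneg _)
            apply mul_le_mul_of_nonneg_left hite (by positivity)
        _ ≤ Kc N * Real.exp (2 * |a.im| * π) * 2^Mr * |Cr| := by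
            apply mul_le_mul_of_nonneg_right ?_ (abs_nonneg _)
            apply mul_le_mul_of_nonneg_right ?_ (by positivity)
            exact mul_le_mul_of_nonneg_left he hKc0
    refine Integrable.mono' (integrable_const _) ?_ hbd
    have heqfun : (fun θ => ∫ r, ‖((φf N a θ r : ℝ):ℂ)‖ ∂μr)
        = fun θ => Kc N * Real.exp (-(2*a.im*θ)) *
            (if 0 < 2*Real.cos θ then (2*Real.cos θ)^Mr else 0) * Cr := funext hnorm
    rw [heqfun]
    apply Measurable.aestronglyMeasurable
    apply Measurable.mul ?_ measurable_const
    apply Measurable.mul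
    · fun_prop
    · apply Measurable.ite (measurableSet_lt measurable_const (by fun_prop)) ?_ measurable_const
      fun_prop
  have hint : Integrable (fun z : ℝ×ℝ => ((φf N a z.2 z.1 : ℝ):ℂ)) (μr.prod μθ) := by
    rw [integrable_prod_iff' hmeaspair]
    exact ⟨Filter.Eventually.of_forall hslice, hintθ⟩
  -- main chain
  have step1 : ((∫ D in closedBall (0:ℂ) 1, gD N a D : ℝ) : ℂ) = ∫ D : ℂ, FD N a D := by
    rw [FD, integral_indicator (measurableSet_closedBall)]
    exact integral_ofReal.symm
  have step2 : (∫ D : ℂ, FD N a D) = ∫ E : ℂ, FD N a (E - 1) :=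
    (integral_sub_right_eq_self (FD N a) 1).symm
  have step3 : (∫ E : ℂ, FD N a (E - 1))
      = ∫ pr in polarCoord.target, pr.1 • FD N a (Complex.polarCoord.symm pr - 1) :=
    (Complex.integral_comp_polarCoord_symm (fun E => FD N a (E - 1))).symm
  have hmsr : (volume : Measure (ℝ×ℝ)).restrict polarCoord.target = μr.prod μθ := by
    rw [polarCoord_target, hμr, hμθ, Measure.prod_restrict, ← Measure.volume_eq_prod]
  have step4 : (∫ pr in polarCoord.target, pr.1 • FD N a (Complex.polarCoord.symm pr - 1))
      = ∫ z : ℝ×ℝ, ((φf N a z.2 z.1 : ℝ):ℂ) ∂(μr.prod μθ) := by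
    rw [← hmsr]
    refine setIntegral_congr_ae polarCoord.open_target.measurableSet
      (Filter.Eventually.of_forall ?_)
    rintro ⟨r, θ⟩ hz
    simp only [polarCoord_target, mem_prod] at hz
    exact polar_pointwise N hN a hz.1 hz.2
  have step5 : (∫ z : ℝ×ℝ, ((φf N a z.2 z.1 : ℝ):ℂ) ∂(μr.prod μθ))
      = ∫ θ, (∫ r, ((φf N a θ r : ℝ):ℂ) ∂μr) ∂μθ := by
    rw [integral_prod _ hint]
    exact integral_integral_swap hint
  have step6 : (∫ θ, (∫ r, ((φf N a θ r : ℝ):ℂ) ∂μr) ∂μθ)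
      = ((∫ θ, (Kc N * Real.exp (-(2*a.im*θ)) *
          (if 0 < 2*Real.cos θ then (2*Real.cos θ)^Mr else 0)) ∂μθ : ℝ) : ℂ)
          * ((Cr:ℝ):ℂ) := by
    rw [show (fun θ => ∫ r, ((φf N a θ r : ℝ):ℂ) ∂μr)
        = fun θ => ((Kc N * Real.exp (-(2*a.im*θ)) *
            (if 0 < 2*Real.cos θ then (2*Real.cos θ)^Mr else 0) : ℝ) : ℂ) * ((Cr:ℝ):ℂ)
        from funext fun θ => by rw [hval θ]; push_cast; ring]
    rw [integral_mul_const]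
    congr 1
    exact integral_ofReal
  have step7 : (∫ θ, (Kc N * Real.exp (-(2*a.im*θ)) *
        (if 0 < 2*Real.cos θ then (2*Real.cos θ)^Mr else 0)) ∂μθ)
      = (Kc N * 2^Mr) *
          ∫ θ in Ioo (-(π/2)) (π/2), Real.cos θ ^ Mr * Real.exp (-(2*a.im*θ)) := by
    have hind : ∀ θ ∈ Ioo (-π) π, (Kc N * Real.exp (-(2*a.im*θ)) *
          (if 0 < 2*Real.cos θ then (2*Real.cos θ)^Mr else 0))
        = (Ioo (-(π/2)) (π/2)).indicator
            (fun θ => (Kc N * 2^Mr) * (Real.cos θ ^ Mr * Real.exp (-(2*a.im*θ)))) θ := by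
      intro θ hθ
      by_cases hmid : θ ∈ Ioo (-(π/2)) (π/2)
      · have hcos : 0 < Real.cos θ := Real.cos_pos_of_mem_Ioo hmid
        rw [indicator_of_mem hmid, if_pos (by linarith)]
        rw [Real.mul_rpow (by norm_num) hcos.le]
        ring
      · have hcos : Real.cos θ ≤ 0 := by
          rcases lt_or_ge θ 0 with hneg | hpos
          · have h1 : π/2 ≤ -θ := by
              by_contra hcon
              exact hmid ⟨by linarith, by linarith⟩
            rw [← Real.cos_neg]
            apply Real.cos_nonpos_of_pi_div_two_le_of_le h1
            linarith [hθ.1]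
          · have h1 : π/2 ≤ θ := by
              by_contra hcon
              exact hmid ⟨by linarith, by linarith⟩
            apply Real.cos_nonpos_of_pi_div_two_le_of_le h1
            linarith [hθ.2]
        rw [indicator_of_notMem hmid, if_neg (by linarith)]
        ring
    rw [hμθ, setIntegral_congr_fun measurableSet_Ioo hind,
      setIntegral_indicator measurableSet_Ioo,
      inter_eq_self_of_subset_right (Ioo_subset_Ioo (by linarith) (by linarith)),
      integral_const_mul]
  rw [step1, step2, step3, step4, step5, step6, step7]
  rw [Complex.ofReal_mul, Complex.ofReal_mul]
  rw [cauchy_beta Mr a.im hMrpos]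
  -- identify Gamma factors
  have hΓ3 : Complex.Gamma (((Mr/2+1 : ℝ):ℂ) + a.im*I) = Complex.Gamma ((N:ℂ)+a) := by
    congr 1
    apply Complex.ext
    · simp only [Complex.add_re, Complex.ofReal_re, Complex.mul_re, Complex.I_re,
        Complex.ofReal_im, Complex.I_im, Complex.natCast_re]
      rw [hMrval]
      ring_nf
    · simp [Complex.add_im]
  have hΓ4 : Complex.Gamma (((Mr/2+1 : ℝ):ℂ) - a.im*I)
      = Complex.Gamma ((N:ℂ)+(starRingEnd ℂ) a) := by
    congr 1
    apply Complex.ext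
    · simp only [Complex.sub_re, Complex.add_re, Complex.ofReal_re, Complex.mul_re, Complex.I_re,
        Complex.ofReal_im, Complex.I_im, Complex.natCast_re, Complex.conj_re]
      rw [hMrval]
      ring_nf
    · simp [Complex.sub_im, Complex.add_im]
  have hCrC2 : ((Cr:ℝ):ℂ)
      = Complex.Gamma ((N:ℂ)+a+(starRingEnd ℂ) a) * Complex.Gamma ((N:ℂ)-1) /
          Complex.Gamma ((Mr:ℂ)+1) := by
    rw [hCrC]
    congr 2
    · congr 1
      apply Complex.ext
      · simp
        ring
      · simp
    · congr 1
      push_cast [Nat.cast_sub hN]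
      ring
    · congr 1
      rw [hMrdef]
      push_cast
      ring
  rw [hΓ3, hΓ4, hCrC2]
  -- final algebra
  set G1 := Complex.Gamma ((N:ℂ)+a+(starRingEnd ℂ) a)
  set G2 := Complex.Gamma ((N:ℂ)+a)
  set G3 := Complex.Gamma ((N:ℂ)+(starRingEnd ℂ) a)
  set G4 := Complex.Gamma ((Mr:ℂ)+1)
  set G5 := Complex.Gamma ((N:ℂ)-1)
  have hne1 : G4 ≠ 0 := by
    apply Gamma_ne_zero_of_re_pos
    simp only [Complex.add_re, Complex.ofReal_re, Complex.one_re]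
    linarith
  have hne2 : G2 ≠ 0 := by
    apply Gamma_ne_zero_of_re_pos
    simp only [Complex.add_re, Complex.natCast_re]
    linarith
  have hne3 : G3 ≠ 0 := by
    apply Gamma_ne_zero_of_re_pos
    simp only [Complex.add_re, Complex.natCast_re, Complex.conj_re]
    linarith
  have hπne : ((π:ℝ):ℂ) ≠ 0 := by exact_mod_cast Real.pi_ne_zero
  have h2Mr : ((2:ℝ)^Mr : ℝ) * ((2:ℂ)^(-((Mr:ℂ)+1)) : ℂ) = (1/2 : ℂ) := by
    rw [Complex.ofReal_cpow (by norm_num), Complex.ofReal_ofNat]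
    rw [← Complex.cpow_add _ _ (by norm_num : (2:ℂ) ≠ 0)]
    rw [show (Mr:ℂ) + -((Mr:ℂ)+1) = -1 by ring, Complex.cpow_neg_one]
    norm_num
  have hΓN : ((N:ℂ)-1) * G5 = Complex.Gamma (N:ℂ) := by
    rw [← Complex.Gamma_add_one]
    · congr 1; ring
    · intro hcon
      have := congrArg Complex.re hcon
      simp only [Complex.sub_re, Complex.natCast_re, Complex.one_re, Complex.zero_re] at this
      linarith
  have hKc : ((Kc N : ℝ) : ℂ) = ((N:ℂ)-1)/(π:ℂ) := by
    rw [Kc]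
    push_cast
    ring
  rw [hKc, ← hΓN]
  have hrearr : ((N:ℂ)-1)/(π:ℂ) * (((2:ℝ)^Mr : ℝ) : ℂ) *
        (((2*π:ℝ):ℂ) * G4 * (2:ℂ)^(-((Mr:ℂ)+1)) / (G2 * G3)) * (G1 * G5 / G4)
      = ((((2:ℝ)^Mr : ℝ) : ℂ) * (2:ℂ)^(-((Mr:ℂ)+1))) * (((N:ℂ)-1) * ((2*π:ℝ):ℂ) / (π:ℂ)) *
          (G4 / G4) * (G1 * G5 / (G2 * G3)) := by
    ring
  rw [hrearr, h2Mr, div_self hne1]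
  rw [show ((2*π:ℝ):ℂ) = 2*((π:ℝ):ℂ) by push_cast; ring]
  field_simp

end DiskAux

open MeasureTheory Metric Complex
open scoped Real

/-- For complex `z, w` with `2 Re z + 2 Re w + N > 0` and `N ≥ 2`,
`∫_𝔻 |(1+D)^z (1+D̄)^w|² ν_N(dD) = Γ(N)Γ(N+z+z̄+w+w̄)/(Γ(N+z+w̄)Γ(N+z̄+w))`,
where `ν_N(dD) = ((N-1)/π)(1-|D|²)^{N-2} ℓ(dD)` on the closed unit disk, `ℓ` being
Lebesgue measure on `ℂ` and powers taken with the principal branch. -/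
theorem disk_integral_norm_v (N : ℕ) (hN : 2 ≤ N) (z w : ℂ)
    (h : 2 * z.re + 2 * w.re + N > 0) :
    ((∫ D in closedBall (0 : ℂ) 1,
        ‖(1 + D) ^ z * (1 + (starRingEnd ℂ) D) ^ w‖ ^ 2 *
          (((N : ℝ) - 1) / Real.pi * (1 - ‖D‖ ^ 2) ^ (N - 2)) : ℝ) : ℂ)
      = Complex.Gamma (N : ℂ) *
          Complex.Gamma ((N : ℂ) + z + (starRingEnd ℂ) z + w + (starRingEnd ℂ) w) /
            (Complex.Gamma ((N : ℂ) + z + (starRingEnd ℂ) w) *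
              Complex.Gamma ((N : ℂ) + (starRingEnd ℂ) z + w)) := by
  set a : ℂ := z + (starRingEnd ℂ) w with ha
  have hre : 0 < 2*a.re + (N:ℝ) := by
    have : a.re = z.re + w.re := by
      rw [ha, Complex.add_re, Complex.conj_re]
    rw [this]
    linarith [h]
  have hae : ∀ᵐ D : ℂ ∂volume, D ≠ -1 := by
    rw [MeasureTheory.ae_iff]
    have : {D : ℂ | ¬ D ≠ -1} = {(-1 : ℂ)} := by
      ext D; simp
    rw [this]
    exact measure_singleton _
  have hint : (∫ D in closedBall (0 : ℂ) 1,
        ‖(1 + D) ^ z * (1 + (starRingEnd ℂ) D) ^ w‖ ^ 2 *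
          (((N : ℝ) - 1) / Real.pi * (1 - ‖D‖ ^ 2) ^ (N - 2)))
      = ∫ D in closedBall (0 : ℂ) 1, DiskAux.gD N a D := by
    apply setIntegral_congr_ae measurableSet_closedBall
    filter_upwards [hae] with D hD hDcb
    have habsD : ‖D‖ ≤ 1 := by
      rw [mem_closedBall, Complex.dist_eq, sub_zero] at hDcb
      exact hDcb
    have hD1 : (1:ℂ) + D ≠ 0 := by
      intro hc
      apply hD
      linear_combination hc
    have hre0 : 0 ≤ ((1:ℂ) + D).re := by
      rw [Complex.add_re, Complex.one_re]
      have h1 := Complex.abs_re_le_norm D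
      have h2 := abs_le.1 (h1.trans habsD)
      linarith [h2.1]
    have harg : ((1:ℂ)+D).arg ≠ π := by
      rw [Ne, Complex.arg_eq_pi_iff]
      rintro ⟨hlt, -⟩
      linarith
    have key : ‖(1 + D) ^ z * (1 + (starRingEnd ℂ) D) ^ w‖
        = ‖(1+D)^a‖ := by
      have hconj : (1 + (starRingEnd ℂ) D) = (starRingEnd ℂ) (1 + D) := by
        rw [map_add, map_one]
      rw [hconj, Complex.conj_cpow _ _ harg, norm_mul, Complex.norm_conj, ← norm_mul,
        ← Complex.cpow_add _ _ hD1, ha]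
    rw [DiskAux.gD, DiskAux.Kc, key]
  rw [hint, DiskAux.disk_key N hN a hre]
  have e1 : (N:ℂ) + a + (starRingEnd ℂ) a
      = (N:ℂ) + z + (starRingEnd ℂ) z + w + (starRingEnd ℂ) w := by
    rw [ha, map_add, Complex.conj_conj]
    ring
  have e2 : (N:ℂ) + a = (N:ℂ) + z + (starRingEnd ℂ) w := by rw [ha]; ring
  have e3 : (N:ℂ) + (starRingEnd ℂ) a = (N:ℂ) + (starRingEnd ℂ) z + w := by
    rw [ha, map_add, Complex.conj_conj]
    ring
  rw [e1, e2, e3]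
end
end
end
end
end
end
end
end

section
/- The Cayley transform commutes with corner projections: for X ∈ Herm(N) with image U = (i-X)(i+X)⁻¹ ∈ U(N)', let X' ∈ Herm(N-1) be the top-left (N-1)×(N-1) corner of X, and let p(U) = A - B(1+D)⁻¹C where U = [[A,B],[C,D]] is the block decomposition for N = (N-1)+1. Then p(U) = (i - X')(i + X')⁻¹; in particular p(U) ∈ U(N-1)'. -/
open Matrix

/-- The canonical projection on block matrices `[[A,B],[C,D]]` (scalar `D`):
`p(U) = A - B(1+D)⁻¹C`. -/
noncomputable def canonicalProj (n : ℕ) (M : Matrix (Fin n ⊕ Fin 1) (Fin n ⊕ Fin 1) ℂ) :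
    Matrix (Fin n) (Fin n) ℂ :=
  M.toBlocks₁₁ - (1 + M (Sum.inr 0) (Sum.inr 0))⁻¹ • (M.toBlocks₁₂ * M.toBlocks₂₁)

/-- The Cayley transform `X ↦ (i - X)(i + X)⁻¹`. -/
noncomputable def cayley (n : ℕ) (X : Matrix (Fin n) (Fin n) ℂ) :
    Matrix (Fin n) (Fin n) ℂ :=
  (Complex.I • (1 : Matrix (Fin n) (Fin n) ℂ) - X) *
    (Complex.I • (1 : Matrix (Fin n) (Fin n) ℂ) + X)⁻¹

/-!
Since `(i + X) + (i - X) = 2i`, the Cayley image `U` of a Hermitian `X` satisfies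
`1 + U = 2i (i + X)⁻¹`, so `(1 + U)⁻¹ = (i + X) / 2i`. The top-left corner of this inverse is
`(i + X') / 2i = (1 + cayley X')⁻¹`, while by the Schur complement formula it is also the inverse
of `(1 + U)₁₁ - (1 + U)₁₂ (1 + U)₂₂⁻¹ (1 + U)₂₁ = 1 + p(U)`. Jacobi's identity
`det (1 + U)₂₂ = det (1 + U) · det ((1 + U)⁻¹)₁₁` shows `1 + D ≠ 0`. Unitarity comes from
`(i - X)ᴴ (i - X) = 1 + X² = (i + X)ᴴ (i + X)`.
-/

section Cayley

variable {m : Type*} [Fintype m] [DecidableEq m] {X : Matrix m m ℂ}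

theorem Matrix.IsHermitian.conjTranspose_mul_self_I_smul_one_add (hX : X.IsHermitian) :
    (Complex.I • 1 + X)ᴴ * (Complex.I • 1 + X) = 1 + X * X := by
  rw [conjTranspose_add, conjTranspose_smul, conjTranspose_one, hX.eq, Complex.star_def,
    Complex.conj_I]
  simp only [add_mul, mul_add, Matrix.smul_mul, Matrix.mul_smul, Matrix.one_mul, Matrix.mul_one,
    smul_smul]
  match_scalars <;> simp

open scoped ComplexOrder in
theorem Matrix.IsHermitian.isUnit_det_I_smul_one_add (hX : X.IsHermitian) :
    IsUnit (Complex.I • 1 + X).det := by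
  have hpos : (1 + X * X).PosDef := by
    simpa only [hX.eq] using PosDef.one.add_posSemidef (posSemidef_conjTranspose_mul_self X)
  rw [← hX.conjTranspose_mul_self_I_smul_one_add] at hpos
  have hdet := (isUnit_iff_isUnit_det _).mp hpos.isUnit
  rw [det_mul] at hdet
  exact isUnit_of_mul_isUnit_right hdet

theorem one_add_cayley_eq_smul_inv (hX : IsUnit (Complex.I • 1 + X).det) :
    1 + (Complex.I • 1 - X) * (Complex.I • 1 + X)⁻¹ = (2 * Complex.I) • (Complex.I • 1 + X)⁻¹ :=
  calc 1 + (Complex.I • 1 - X) * (Complex.I • 1 + X)⁻¹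
      = (Complex.I • 1 + X + (Complex.I • 1 - X)) * (Complex.I • 1 + X)⁻¹ := by
        rw [add_mul, mul_nonsing_inv _ hX]
    _ = (2 * Complex.I) • (Complex.I • 1 + X)⁻¹ := by
        rw [show Complex.I • 1 + X + (Complex.I • 1 - X) = (2 * Complex.I) • (1 : Matrix m m ℂ) by
          module, Matrix.smul_mul, Matrix.one_mul]

theorem Matrix.IsHermitian.one_add_cayley_mul_smul_I_smul_one_add (hX : X.IsHermitian) :
    (1 + (Complex.I • 1 - X) * (Complex.I • 1 + X)⁻¹) * ((2 * Complex.I)⁻¹ • (Complex.I • 1 + X))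
      = 1 := by
  rw [one_add_cayley_eq_smul_inv hX.isUnit_det_I_smul_one_add, smul_mul_smul_comm,
    mul_inv_cancel₀ (by simp), one_smul, nonsing_inv_mul _ hX.isUnit_det_I_smul_one_add]

theorem Matrix.IsHermitian.isUnit_det_one_add_cayley (hX : X.IsHermitian) :
    IsUnit (1 + (Complex.I • 1 - X) * (Complex.I • 1 + X)⁻¹).det :=
  isUnit_det_of_right_inverse hX.one_add_cayley_mul_smul_I_smul_one_add

theorem Matrix.IsHermitian.inv_one_add_cayley (hX : X.IsHermitian) :
    (1 + (Complex.I • 1 - X) * (Complex.I • 1 + X)⁻¹)⁻¹ =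
      (2 * Complex.I)⁻¹ • (Complex.I • 1 + X) :=
  inv_eq_right_inv hX.one_add_cayley_mul_smul_I_smul_one_add

theorem Matrix.IsHermitian.cayley_mem_unitaryGroup (hX : X.IsHermitian) :
    (Complex.I • 1 - X) * (Complex.I • 1 + X)⁻¹ ∈ unitaryGroup m ℂ := by
  set M := Complex.I • 1 + X
  set N := Complex.I • (1 : Matrix m m ℂ) - X with hN
  have hNM : Nᴴ * N = Mᴴ * M := by
    rw [hN, sub_eq_add_neg, hX.neg.conjTranspose_mul_self_I_smul_one_add, neg_mul_neg,
      hX.conjTranspose_mul_self_I_smul_one_add]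
  rw [mem_unitaryGroup_iff', star_eq_conjTranspose, conjTranspose_mul]
  calc (M⁻¹)ᴴ * Nᴴ * (N * M⁻¹) = (M⁻¹)ᴴ * (Mᴴ * M) * M⁻¹ := by
        rw [← hNM]; simp only [Matrix.mul_assoc]
    _ = (M * M⁻¹)ᴴ * (M * M⁻¹) := by
        rw [conjTranspose_mul]; simp only [Matrix.mul_assoc]
    _ = 1 := by
        rw [mul_nonsing_inv _ hX.isUnit_det_I_smul_one_add, conjTranspose_one, Matrix.one_mul]

end Cayley

section Blocks

variable {l m α : Type*} [Fintype l] [Fintype m] [DecidableEq l] [DecidableEq m] [CommRing α]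
  {W V : Matrix (l ⊕ m) (l ⊕ m) α}

theorem toBlocks_mul_eq_one (h : W * V = 1) :
    W.toBlocks₁₁ * V.toBlocks₁₁ + W.toBlocks₁₂ * V.toBlocks₂₁ = 1 ∧
    W.toBlocks₁₁ * V.toBlocks₁₂ + W.toBlocks₁₂ * V.toBlocks₂₂ = 0 ∧
    W.toBlocks₂₁ * V.toBlocks₁₁ + W.toBlocks₂₂ * V.toBlocks₂₁ = 0 ∧
    W.toBlocks₂₁ * V.toBlocks₁₂ + W.toBlocks₂₂ * V.toBlocks₂₂ = 1 := by
  rw [← fromBlocks_toBlocks W, ← fromBlocks_toBlocks V, fromBlocks_multiply, ← fromBlocks_one,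
    fromBlocks_inj] at h
  simpa only [toBlocks_fromBlocks₁₁, toBlocks_fromBlocks₁₂, toBlocks_fromBlocks₂₁,
    toBlocks_fromBlocks₂₂] using h

/-- Jacobi's complementary minor identity. -/
theorem det_toBlocks₂₂_eq_det_mul_det_toBlocks₁₁_inv (hW : IsUnit W.det) :
    W.toBlocks₂₂.det = W.det * W⁻¹.toBlocks₁₁.det := by
  obtain ⟨h₁₁, -, h₂₁, -⟩ := toBlocks_mul_eq_one (mul_nonsing_inv W hW)
  have hfactor : W * fromBlocks W⁻¹.toBlocks₁₁ 0 W⁻¹.toBlocks₂₁ 1 =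
      fromBlocks 1 W.toBlocks₁₂ 0 W.toBlocks₂₂ := by
    conv_lhs => arg 1; rw [← fromBlocks_toBlocks W]
    simp only [fromBlocks_multiply, h₁₁, h₂₁, Matrix.mul_zero, Matrix.mul_one, zero_add]
  simpa [det_fromBlocks_zero₁₂, det_fromBlocks_zero₂₁] using (congrArg det hfactor).symm

theorem inv_toBlocks₁₁_inv_eq_schur (hW : IsUnit W.det) (hD : IsUnit W.toBlocks₂₂.det) :
    (W⁻¹.toBlocks₁₁)⁻¹ = W.toBlocks₁₁ - W.toBlocks₁₂ * W.toBlocks₂₂⁻¹ * W.toBlocks₂₁ := by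
  obtain ⟨h₁₁, h₁₂, -, -⟩ := toBlocks_mul_eq_one (nonsing_inv_mul W hW)
  have h₁₂' : W⁻¹.toBlocks₁₂ = -(W⁻¹.toBlocks₁₁ * W.toBlocks₁₂ * W.toBlocks₂₂⁻¹) :=
    calc W⁻¹.toBlocks₁₂ = W⁻¹.toBlocks₁₂ * W.toBlocks₂₂ * W.toBlocks₂₂⁻¹ := by
          rw [Matrix.mul_assoc, mul_nonsing_inv _ hD, Matrix.mul_one]
      _ = _ := by rw [eq_neg_of_add_eq_zero_right h₁₂, Matrix.neg_mul]
  refine inv_eq_right_inv ?_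
  rw [Matrix.mul_sub, ← h₁₁, h₁₂']
  simp only [Matrix.neg_mul, Matrix.mul_assoc]
  abel

end Blocks

theorem one_add_canonicalProj (n : ℕ) (U : Matrix (Fin n ⊕ Fin 1) (Fin n ⊕ Fin 1) ℂ) :
    1 + canonicalProj n U = (1 + U).toBlocks₁₁ -
      (1 + U).toBlocks₁₂ * (1 + U).toBlocks₂₂⁻¹ * (1 + U).toBlocks₂₁ := by
  ext i j
  simp [canonicalProj, toBlocks₁₁, toBlocks₁₂, toBlocks₂₁, toBlocks₂₂, Matrix.mul_apply, one_apply,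
    add_sub_assoc, mul_left_comm, mul_assoc]

/-- The Cayley transform commutes with corner projections: if `X` is Hermitian of size
`N = n+1` with Cayley image `U`, and `X'` is the top-left `n×n` corner of `X`, then the
`(N,N)` entry of `U` is `≠ -1`, the canonical projection `p(U) = A - B(1+D)⁻¹C` equals
the Cayley transform of `X'`, and `p(U)` is unitary without eigenvalue `-1`. -/
theorem cayley_commutes_with_corner (n : ℕ)
    (X : Matrix (Fin n ⊕ Fin 1) (Fin n ⊕ Fin 1) ℂ) (hX : X.IsHermitian) :
    (let U := (Complex.I • (1 : Matrix (Fin n ⊕ Fin 1) (Fin n ⊕ Fin 1) ℂ) - X) *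
        (Complex.I • (1 : Matrix (Fin n ⊕ Fin 1) (Fin n ⊕ Fin 1) ℂ) + X)⁻¹
     U (Sum.inr 0) (Sum.inr 0) ≠ -1 ∧
      1 + U (Sum.inr 0) (Sum.inr 0) ≠ 0 ∧
      canonicalProj n U = cayley n X.toBlocks₁₁ ∧
      canonicalProj n U ∈ Matrix.unitaryGroup (Fin n) ℂ ∧
      (1 + canonicalProj n U).det ≠ 0) := by
  intro U
  have hX' : X.toBlocks₁₁.IsHermitian := hX.submatrix Sum.inl
  have hW := hX.isUnit_det_one_add_cayley
  have hW' : IsUnit (1 + cayley n X.toBlocks₁₁).det := hX'.isUnit_det_one_add_cayley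
  have hcorner : (1 + U)⁻¹.toBlocks₁₁ = (1 + cayley n X.toBlocks₁₁)⁻¹ := by
    rw [hX.inv_one_add_cayley, cayley, hX'.inv_one_add_cayley]
    ext i j
    simp [toBlocks₁₁, one_apply]
  have hD : IsUnit (1 + U).toBlocks₂₂.det := by
    rw [det_toBlocks₂₂_eq_det_mul_det_toBlocks₁₁_inv hW, hcorner]
    exact hW.mul (isUnit_nonsing_inv_det _ hW')
  have hp : canonicalProj n U = cayley n X.toBlocks₁₁ := by
    refine add_left_cancel (a := 1) ?_
    rw [one_add_canonicalProj, ← inv_toBlocks₁₁_inv_eq_schur hW hD, hcorner,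
      nonsing_inv_nonsing_inv _ hW']
  have hs : 1 + U (Sum.inr 0) (Sum.inr 0) ≠ 0 := by
    simpa [det_unique, toBlocks₂₂] using hD.ne_zero
  exact ⟨fun h ↦ hs (by rw [h]; ring), hs, hp, hp ▸ hX'.cayley_mem_unitaryGroup, hp ▸ hW'.ne_zero⟩
end

section
/- Let (M_n) be a sequence of probability measures on ℝ, each with finite fourth moment, converging weakly to a probability measure M. If there is a constant C such that for all n the fourth moment of M_n is at most C times the square of the second moment of M_n, then the second moments ∫x² dM_n are uniformly bounded in n. -/
open MeasureTheory Filter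

/-- A continuous cutoff: `0` on `[-K,K]`, `1` outside `[-(K+1),K+1]`. -/
noncomputable def cutoff (K : ℝ) : BoundedContinuousFunction ℝ ℝ :=
  ⟨⟨fun x => min 1 (max (|x| - K) 0),
      continuous_const.min ((continuous_abs.sub continuous_const).max continuous_const)⟩, 1, by
    intro x y
    have h0 : ∀ z : ℝ, 0 ≤ min 1 (max (|z| - K) 0) :=
      fun z => le_min zero_le_one (le_max_right _ _)
    have h1 : ∀ z : ℝ, min 1 (max (|z| - K) 0) ≤ 1 := fun z => min_le_left _ _
    rw [Real.dist_eq, abs_sub_le_iff]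
    constructor <;> linarith [h0 x, h1 x, h0 y, h1 y]⟩

lemma cutoff_apply (K x : ℝ) : cutoff K x = min 1 (max (|x| - K) 0) := rfl

lemma cutoff_nonneg (K x : ℝ) : 0 ≤ cutoff K x :=
  le_min zero_le_one (le_max_right _ _)

lemma cutoff_eq_one (K x : ℝ) (h : K + 1 < |x|) : cutoff K x = 1 := by
  have : (1 : ℝ) ≤ max (|x| - K) 0 := le_max_of_le_left (by linarith)
  simpa [cutoff_apply] using min_eq_left this

lemma cutoff_eq_zero (K x : ℝ) (h : |x| < K) : cutoff K x = 0 := by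
  have : max (|x| - K) 0 = 0 := max_eq_right (by linarith)
  simp [cutoff_apply, this]

/-- Let `(M n)` be probability measures on `ℝ` with finite fourth moments, converging
weakly (i.e. `∫ f dM_n → ∫ f dM` for every bounded continuous `f`) to a probability
measure `M`. If the fourth moment of each `M n` is at most `C` times the square of its
second moment, then the second moments are uniformly bounded. -/
theorem second_moments_bounded_of_weak_convergence
    (M : ℕ → Measure ℝ) (Mlim : Measure ℝ)
    [∀ n, IsProbabilityMeasure (M n)] [IsProbabilityMeasure Mlim]
    (hmom : ∀ n, Integrable (fun x : ℝ => x ^ 4) (M n))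
    (hweak : ∀ f : BoundedContinuousFunction ℝ ℝ,
      Tendsto (fun n => ∫ x, f x ∂(M n)) atTop (nhds (∫ x, f x ∂Mlim)))
    (C : ℝ)
    (hC : ∀ n, ∫ x, x ^ 4 ∂(M n) ≤ C * (∫ x, x ^ 2 ∂(M n)) ^ 2) :
    ∃ B : ℝ, ∀ n, ∫ x, x ^ 2 ∂(M n) ≤ B := by
  classical
  set C' := max C 1 with hC'def
  have hC1 : (1:ℝ) ≤ C' := le_max_right _ _
  have hC0 : (0:ℝ) < C' := by linarith
  have hmnn : ∀ n, 0 ≤ ∫ x, x ^ 2 ∂(M n) :=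
    fun n => integral_nonneg fun x => sq_nonneg x
  have hC' : ∀ n, ∫ x, x ^ 4 ∂(M n) ≤ C' * (∫ x, x ^ 2 ∂(M n)) ^ 2 := fun n =>
    (hC n).trans (mul_le_mul_of_nonneg_right (le_max_left _ _) (sq_nonneg _))
  -- tightness of the limit measure: choose a cutoff level K
  have htail : Tendsto (fun K : ℕ => Mlim {x : ℝ | (K:ℝ) ≤ |x|}) atTop (nhds 0) := by
    have hmeas : ∀ K : ℕ, MeasurableSet {x : ℝ | (K:ℝ) ≤ |x|} :=
      fun K => measurableSet_le measurable_const continuous_abs.measurable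
    have hanti : Antitone (fun K : ℕ => {x : ℝ | (K:ℝ) ≤ |x|}) := by
      intro i j hij x hx
      simp only [Set.mem_setOf_eq] at hx ⊢
      exact le_trans (by exact_mod_cast hij) hx
    have h1 := tendsto_measure_iInter_atTop (μ := Mlim)
      (fun K => (hmeas K).nullMeasurableSet) hanti ⟨0, measure_ne_top _ _⟩
    have h2 : (⋂ K : ℕ, {x : ℝ | (K:ℝ) ≤ |x|}) = ∅ := by
      ext x
      simp only [Set.mem_iInter, Set.mem_setOf_eq, Set.mem_empty_iff_false, iff_false,
        not_forall, not_le]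
      exact ⟨⌊|x|⌋₊ + 1, by push_cast; exact Nat.lt_floor_add_one _⟩
    rw [h2, measure_empty] at h1
    exact h1
  have hpos : (0 : ENNReal) < ENNReal.ofReal (1/(2*C')) :=
    ENNReal.ofReal_pos.mpr (by positivity)
  obtain ⟨K, hK⟩ := (htail.eventually_lt_const hpos).exists
  set g := cutoff (K : ℝ) with hg
  -- the integral of g against the limit is small
  have hglim : ∫ x, g x ∂Mlim < 1/(2*C') := by
    have hmeas : MeasurableSet {x : ℝ | (K:ℝ) ≤ |x|} :=
      measurableSet_le measurable_const continuous_abs.measurable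
    have hle : ∀ x : ℝ, g x ≤ Set.indicator {x : ℝ | (K:ℝ) ≤ |x|} (fun _ => (1:ℝ)) x := by
      intro x
      rw [Set.indicator_apply]
      split_ifs with hx
      · exact min_le_left _ _
      · simp only [Set.mem_setOf_eq, not_le] at hx
        exact le_of_eq (cutoff_eq_zero _ _ hx)
    have hind : Integrable (Set.indicator {x : ℝ | (K:ℝ) ≤ |x|} (fun _ => (1:ℝ))) Mlim :=
      (integrable_const 1).indicator hmeas
    calc ∫ x, g x ∂Mlim
        ≤ ∫ x, Set.indicator {x : ℝ | (K:ℝ) ≤ |x|} (fun _ => (1:ℝ)) x ∂Mlim :=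
          integral_mono (g.integrable Mlim) hind hle
      _ = (Mlim {x : ℝ | (K:ℝ) ≤ |x|}).toReal := by
          rw [integral_indicator_const _ hmeas]; simp; rfl
      _ < 1/(2*C') := ENNReal.toReal_lt_of_lt_ofReal hK
  obtain ⟨N, hN⟩ := eventually_atTop.mp ((hweak g).eventually_lt_const hglim)
  set t : ℝ := ((K:ℝ) + 1) ^ 2 with ht
  have ht1 : (1:ℝ) ≤ t := by
    have : (0:ℝ) ≤ (K:ℝ) := Nat.cast_nonneg _
    nlinarith
  -- main estimate: if the integral of g is small then the second moment is ≤ 4t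
  have key : ∀ n, ∫ x, g x ∂(M n) ≤ 1/(2*C') → ∫ x, x ^ 2 ∂(M n) ≤ 4 * t := by
    intro n hgsmall
    set m := ∫ x, x ^ 2 ∂(M n) with hm
    by_contra hcon
    push_neg at hcon
    have hm0 : 0 < m := lt_of_lt_of_le (by linarith) hcon.le
    set ε : ℝ := 1/(2*C'*m) with hε
    have hε0 : 0 < ε := by positivity
    set cc : ℝ := C'*m/2 with hcc
    have hcc0 : 0 < cc := by positivity
    have hεcc : ε * cc = 1/4 := by
      rw [hε, hcc]; field_simp; ring
    -- the pointwise inequality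
    have hpt : ∀ x : ℝ, x ^ 2 ≤ t + ε * x ^ 4 + cc * g x := by
      intro x
      rcases le_or_gt (|x|) ((K:ℝ) + 1) with h | h
      · have hx2 : x ^ 2 ≤ t := by
          have h1 : 0 ≤ |x| := abs_nonneg x
          have h2 : |x| ^ 2 ≤ ((K:ℝ) + 1) ^ 2 := by nlinarith
          rw [ht]; rwa [sq_abs] at h2
        have h3 : 0 ≤ ε * x ^ 4 := by positivity
        have h4 : 0 ≤ cc * g x := mul_nonneg hcc0.le (cutoff_nonneg _ _)
        linarith
      · have hg1 : g x = 1 := cutoff_eq_one _ _ h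
        rw [hg1, mul_one]
        have hamgm : x ^ 2 ≤ ε * x ^ 4 + cc := by
          have h1 : 0 ≤ (2 * ε * x ^ 2 - 1) ^ 2 := sq_nonneg _
          nlinarith [hε0, mul_pos hε0 hε0]
        have : (0:ℝ) ≤ t := by linarith
        linarith
    -- integrate it
    have hint2 : Integrable (fun x : ℝ => x ^ 2) (M n) := by
      have hdom : Integrable (fun x : ℝ => 1 + x ^ 4) (M n) := (integrable_const 1).add (hmom n)
      refine hdom.mono ?_ (ae_of_all _ fun x => ?_)
      · exact (continuous_pow 2).aestronglyMeasurable
      · rw [Real.norm_eq_abs, Real.norm_eq_abs, abs_of_nonneg (by positivity),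
          abs_of_nonneg (by positivity)]
        nlinarith [sq_nonneg (x ^ 2 - 1)]
    have hintg : Integrable (fun x => g x) (M n) := g.integrable (M n)
    have hrhs : Integrable (fun x : ℝ => t + ε * x ^ 4 + cc * g x) (M n) :=
      ((integrable_const t).add ((hmom n).const_mul ε)).add (hintg.const_mul cc)
    have hit : Integrable (fun _ : ℝ => t) (M n) := integrable_const t
    have hi4 : Integrable (fun x : ℝ => ε * x ^ 4) (M n) := (hmom n).const_mul ε
    have hi1 : Integrable (fun x : ℝ => t + ε * x ^ 4) (M n) := hit.add hi4
    have hi2 : Integrable (fun x : ℝ => cc * g x) (M n) := hintg.const_mul cc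
    have hineq : m ≤ t + ε * ∫ x, x ^ 4 ∂(M n) + cc * ∫ x, g x ∂(M n) := by
      calc m ≤ ∫ x, (t + ε * x ^ 4 + cc * g x) ∂(M n) := integral_mono hint2 hrhs hpt
        _ = t + ε * ∫ x, x ^ 4 ∂(M n) + cc * ∫ x, g x ∂(M n) := by
            rw [integral_add hi1 hi2, integral_add hit hi4,
              integral_const, integral_const_mul, integral_const_mul]
            simp
    have h4th : ε * ∫ x, x ^ 4 ∂(M n) ≤ m / 2 := by
      have h1 : ε * ∫ x, x ^ 4 ∂(M n) ≤ ε * (C' * m ^ 2) :=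
        mul_le_mul_of_nonneg_left (hC' n) hε0.le
      have h2 : ε * (C' * m ^ 2) = m / 2 := by
        rw [hε]; field_simp
      linarith
    have hgterm : cc * ∫ x, g x ∂(M n) ≤ m / 4 := by
      have h1 : cc * ∫ x, g x ∂(M n) ≤ cc * (1/(2*C')) :=
        mul_le_mul_of_nonneg_left hgsmall hcc0.le
      have h2 : cc * (1/(2*C')) = m / 4 := by
        rw [hcc]; field_simp; ring
      linarith
    linarith
  -- conclude: combine the eventual bound with the finitely many initial terms
  refine ⟨(Finset.range (N+1)).sup' ⟨0, Finset.mem_range.mpr (Nat.succ_pos N)⟩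
    (fun k => max (∫ x, x ^ 2 ∂(M k)) (4 * t)), fun n => ?_⟩
  rcases lt_or_ge n (N+1) with h | h
  · exact le_trans (le_max_left _ _)
      (Finset.le_sup' (fun k => max (∫ x, x ^ 2 ∂(M k)) (4 * t)) (Finset.mem_range.mpr h))
  · have hb : ∫ x, x ^ 2 ∂(M n) ≤ 4 * t := key n (hN n (by omega)).le
    refine hb.trans (le_trans (le_max_right _ _)
      (Finset.le_sup' (fun k => max (∫ x, x ^ 2 ∂(M k)) (4 * t))
        (Finset.mem_range.mpr (Nat.succ_pos N))))
end

section
/- For all complex a, b and real x → +∞, Γ(a+x)/Γ(b+x) ~ x^{a-b}; precisely, lim_{x→+∞} Γ(a+x)/(Γ(b+x) · x^{a-b}) = 1, where x ranges over positive reals large enough that a+x, b+x avoid the poles of Γ. -/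
open Filter MeasureTheory Set
open scoped Topology

namespace GammaRatioAux

lemma tendsto_base_pow (a : ℂ) {v : ℝ} (hv : 0 < v) :
    Tendsto (fun x : ℝ => (((1 - v / x : ℝ) : ℂ)) ^ (a + x - 1)) atTop
      (𝓝 (Real.exp (-v) : ℂ)) := by
  have hbase : Tendsto (fun x : ℝ => 1 - v / x) atTop (𝓝 1) := by
    simpa using tendsto_const_nhds.sub (Tendsto.div_atTop (tendsto_const_nhds (x := v)) tendsto_id)
  have hlog : Tendsto (fun x : ℝ => Real.log (1 - v / x)) atTop (𝓝 0) := by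
    have := (Real.continuousAt_log one_ne_zero).tendsto.comp hbase
    simpa [Function.comp_def] using this
  have hxlog : Tendsto (fun x : ℝ => x * Real.log (1 - v / x)) atTop (𝓝 (-v)) := by
    have := Real.tendsto_mul_log_one_add_div_atTop (-v)
    simpa [sub_eq_add_neg, neg_div] using this
  -- complex exponent tendsto
  have hexp : Tendsto (fun x : ℝ => Complex.log ((1 - v / x : ℝ) : ℂ) * (a + x - 1))
      atTop (𝓝 (-v : ℂ)) := by
    have h1 : Tendsto (fun x : ℝ => ((Real.log (1 - v / x) : ℝ) : ℂ) * (a - 1))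
        atTop (𝓝 0) := by
      have := ((Complex.continuous_ofReal.tendsto 0).comp hlog).mul_const (a - 1)
      simpa using this
    have h2 : Tendsto (fun x : ℝ => ((x * Real.log (1 - v / x) : ℝ) : ℂ))
        atTop (𝓝 (-v : ℂ)) := by
      have := (Complex.continuous_ofReal.tendsto _).comp hxlog
      simpa [Function.comp_def] using this
    have h3 := h1.add h2
    rw [zero_add] at h3
    apply h3.congr'
    filter_upwards [eventually_gt_atTop (max 0 v)] with x hx
    have hx0 : 0 < x := lt_of_le_of_lt (le_max_left 0 v) hx
    have hvx : v / x < 1 := (div_lt_one hx0).mpr (lt_of_le_of_lt (le_max_right 0 v) hx)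
    have hpos : (0:ℝ) < 1 - v / x := by linarith
    rw [← Complex.ofReal_log hpos.le]
    push_cast
    ring
  have heq : ((Real.exp (-v) : ℝ) : ℂ) = Complex.exp (-v : ℂ) := by
    rw [Complex.ofReal_exp, Complex.ofReal_neg]
  rw [heq]
  have := (Complex.continuous_exp.tendsto _).comp hexp
  apply this.congr'
  filter_upwards [eventually_gt_atTop (max 0 v)] with x hx
  have hx0 : 0 < x := lt_of_le_of_lt (le_max_left 0 v) hx
  have hvx : v / x < 1 := (div_lt_one hx0).mpr (lt_of_le_of_lt (le_max_right 0 v) hx)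
  have hpos : (0:ℝ) < 1 - v / x := by linarith
  have hne : ((1 - v / x : ℝ) : ℂ) ≠ 0 := by exact_mod_cast hpos.ne'
  simp only [Function.comp]
  rw [Complex.cpow_def_of_ne_zero hne]

set_option maxHeartbeats 1000000 in
lemma key_aux (a c : ℂ)
  (f_meas : ∀ x : ℝ, AEStronglyMeasurable
      ((Ioc (0:ℝ) x).indicator fun v : ℝ =>
        (v : ℂ) ^ (c - 1) * (((1 - v / x : ℝ) : ℂ)) ^ (a + x - 1))
      (volume.restrict (Ioi 0)))
  (bound_int : Integrable (fun v : ℝ => v ^ (c.re - 1) * Real.exp (-(2⁻¹ * v)))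
      (volume.restrict (Ioi 0)))
  (h_bound : ∀ᶠ x : ℝ in atTop, ∀ᵐ v ∂(volume.restrict (Ioi 0)),
      ‖(Ioc (0:ℝ) x).indicator (fun v : ℝ =>
        (v : ℂ) ^ (c - 1) * (((1 - v / x : ℝ) : ℂ)) ^ (a + x - 1)) v‖
        ≤ v ^ (c.re - 1) * Real.exp (-(2⁻¹ * v)))
  (h_lim : ∀ᵐ v ∂(volume.restrict (Ioi 0)),
      Tendsto (fun x : ℝ => (Ioc (0:ℝ) x).indicator (fun v : ℝ =>
        (v : ℂ) ^ (c - 1) * (((1 - v / x : ℝ) : ℂ)) ^ (a + x - 1)) v) atTop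
      (𝓝 (↑(Real.exp (-v)) * (v:ℂ) ^ (c - 1)))) :
  Tendsto (fun x : ℝ => ∫ v in Ioi (0:ℝ), (Ioc (0:ℝ) x).indicator (fun v : ℝ =>
        (v : ℂ) ^ (c - 1) * (((1 - v / x : ℝ) : ℂ)) ^ (a + x - 1)) v) atTop
      (𝓝 (∫ v in Ioi (0:ℝ), ↑(Real.exp (-v)) * (v:ℂ) ^ (c - 1))) :=
  tendsto_integral_filter_of_dominated_convergence _
      (Eventually.of_forall f_meas) h_bound bound_int h_lim

set_option maxHeartbeats 4000000 in
lemma tendsto_I (a c : ℂ) (hc : 0 < c.re) :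
    Tendsto (fun x : ℝ => ∫ v in (0:ℝ)..x,
        (v : ℂ) ^ (c - 1) * (((1 - v / x : ℝ) : ℂ)) ^ (a + x - 1)) atTop
      (𝓝 (Complex.Gamma c)) := by
  rw [Complex.Gamma_eq_integral hc, Complex.GammaIntegral]
  have f_meas : ∀ x : ℝ, AEStronglyMeasurable
      ((Ioc (0:ℝ) x).indicator fun v : ℝ =>
        (v : ℂ) ^ (c - 1) * (((1 - v / x : ℝ) : ℂ)) ^ (a + x - 1))
      (volume.restrict (Ioi 0)) := by
    intro x
    refine (Measurable.indicator ?_ measurableSet_Ioc).aestronglyMeasurable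
    apply Measurable.mul
    · simp_rw [Complex.cpow_def]
      apply Measurable.ite
      · exact measurableSet_eq_fun (Complex.measurable_ofReal.comp measurable_id) measurable_const
      · exact measurable_const
      · exact Complex.measurable_exp.comp
          ((Complex.measurable_log.comp (Complex.measurable_ofReal.comp measurable_id)).mul
            measurable_const)
    · simp_rw [Complex.cpow_def]
      apply Measurable.ite
      · exact measurableSet_eq_fun
          (Complex.measurable_ofReal.comp ((measurable_id.div_const x).const_sub 1))
          measurable_const
      · exact measurable_const
      · exact Complex.measurable_exp.comp
          ((Complex.measurable_log.comp
            (Complex.measurable_ofReal.comp ((measurable_id.div_const x).const_sub 1))).mul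
            measurable_const)
  have bound_int : Integrable (fun v : ℝ => v ^ (c.re - 1) * Real.exp (-(2⁻¹ * v)))
      (volume.restrict (Ioi 0)) := by
    have := integrableOn_rpow_mul_exp_neg_mul_rpow (p := 1) (s := c.re - 1) (b := 2⁻¹)
      (by linarith) (by norm_num) (by norm_num)
    simpa [Real.rpow_one, neg_mul, IntegrableOn] using this
  have h_bound : ∀ᶠ x : ℝ in atTop, ∀ᵐ v ∂(volume.restrict (Ioi 0)),
      ‖(Ioc (0:ℝ) x).indicator (fun v : ℝ =>
        (v : ℂ) ^ (c - 1) * (((1 - v / x : ℝ) : ℂ)) ^ (a + x - 1)) v‖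
        ≤ v ^ (c.re - 1) * Real.exp (-(2⁻¹ * v)) := by
    filter_upwards [eventually_ge_atTop (max 2 (2 * (1 - a.re)))] with x hx
    have hx2 : (2:ℝ) ≤ x := le_trans (le_max_left _ _) hx
    have hxa : 2 * (1 - a.re) ≤ x := le_trans (le_max_right _ _) hx
    have hx0 : (0:ℝ) < x := by linarith
    have hre : x / 2 ≤ a.re + x - 1 := by linarith
    have hrepos : (0:ℝ) < a.re + x - 1 := by linarith
    rw [ae_restrict_iff' measurableSet_Ioi]
    filter_upwards with v hv
    have hv0 : (0:ℝ) < v := hv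
    rcases lt_or_ge x v with hxv | hvx
    · rw [indicator_of_notMem (fun h => absurd h.2 (not_le.mpr hxv)), norm_zero]
      positivity
    · rw [indicator_of_mem (mem_Ioc.mpr ⟨hv0, hvx⟩), norm_mul]
      have h1 : ‖(v:ℂ) ^ (c - 1)‖ = v ^ (c.re - 1) := by
        rw [Complex.norm_cpow_eq_rpow_re_of_pos hv0, Complex.sub_re,
          Complex.one_re]
      rw [h1]
      refine mul_le_mul_of_nonneg_left ?_ (Real.rpow_nonneg hv0.le _)
      rcases eq_or_lt_of_le hvx with hvx' | hvx'
      · have hb : ((1 - v / x : ℝ) : ℂ) = 0 := by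
          rw [hvx', div_self hx0.ne']; norm_num
        have hexp_ne : a + (x:ℂ) - 1 ≠ 0 := by
          intro h
          have := congrArg Complex.re h
          simp only [Complex.sub_re, Complex.add_re, Complex.ofReal_re, Complex.one_re,
            Complex.zero_re] at this
          linarith
        rw [hb, Complex.zero_cpow hexp_ne, norm_zero]
        positivity
      · have ht0 : (0:ℝ) < 1 - v / x := by
          rw [sub_pos, div_lt_one hx0]; exact hvx'
        have ht1 : 1 - v / x ≤ 1 := by
          have : 0 ≤ v / x := div_nonneg hv0.le hx0.le
          linarith
        rw [Complex.norm_cpow_eq_rpow_re_of_pos ht0]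
        have hexpre : (a + (x:ℂ) - 1).re = a.re + x - 1 := by
          simp [Complex.add_re, Complex.sub_re]
        rw [hexpre, Real.rpow_def_of_pos ht0, Real.exp_le_exp]
        have hlt0 : Real.log (1 - v / x) ≤ 0 := Real.log_nonpos ht0.le ht1
        have step1 : Real.log (1 - v / x) * (a.re + x - 1) ≤ Real.log (1 - v / x) * (x / 2) :=
          mul_le_mul_of_nonpos_left hre hlt0
        have step2 : Real.log (1 - v / x) * (x / 2) ≤ (-(v / x)) * (x / 2) := by
          have hlog : Real.log (1 - v / x) ≤ (1 - v / x) - 1 :=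
            Real.log_le_sub_one_of_pos ht0
          have he : (1 - v / x) - 1 = -(v / x) := by ring
          rw [he] at hlog
          exact mul_le_mul_of_nonneg_right hlog (by linarith)
        have step3 : (-(v / x)) * (x / 2) = -(2⁻¹ * v) := by
          field_simp
        calc Real.log (1 - v / x) * (a.re + x - 1) ≤ _ := step1
          _ ≤ _ := step2
          _ = _ := step3
  have h_lim : ∀ᵐ v ∂(volume.restrict (Ioi 0)),
      Tendsto (fun x : ℝ => (Ioc (0:ℝ) x).indicator (fun v : ℝ =>
        (v : ℂ) ^ (c - 1) * (((1 - v / x : ℝ) : ℂ)) ^ (a + x - 1)) v) atTop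
      (𝓝 (↑(Real.exp (-v)) * (v:ℂ) ^ (c - 1))) := by
    rw [ae_restrict_iff' measurableSet_Ioi]
    filter_upwards with v hv
    have hv0 : (0:ℝ) < v := hv
    have base := (tendsto_base_pow a hv0).const_mul ((v:ℂ) ^ (c - 1))
    rw [mul_comm]
    apply base.congr'
    filter_upwards [eventually_ge_atTop v] with x hxv
    rw [indicator_of_mem (mem_Ioc.mpr ⟨hv0, hxv⟩)]
  have key := key_aux a c f_meas bound_int h_bound h_lim
  apply key.congr'
  filter_upwards [eventually_ge_atTop (0:ℝ)] with x hx0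
  rw [MeasureTheory.integral_indicator measurableSet_Ioc,
    intervalIntegral.integral_of_le hx0,
    Measure.restrict_restrict_of_subset Ioc_subset_Ioi_self]

lemma beta_eq (a c : ℂ) {x : ℝ} (hx : 0 < x) :
    (x:ℂ) ^ c * Complex.betaIntegral c (a + x) =
      ∫ v in (0:ℝ)..x, (v : ℂ) ^ (c - 1) * (((1 - v / x : ℝ) : ℂ)) ^ (a + x - 1) := by
  have hx' : (x:ℝ) ≠ 0 := hx.ne'
  have hxc : (x:ℂ) ≠ 0 := Complex.ofReal_ne_zero.mpr hx'
  have key := intervalIntegral.integral_comp_div (a := 0) (b := x)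
    (fun t : ℝ => (x:ℂ) ^ (c - 1) * (t:ℂ) ^ (c - 1) * (((1 - t : ℝ) : ℂ)) ^ (a + x - 1)) hx'
  rw [zero_div, div_self hx'] at key
  -- key : ∫ v in 0..x, f (v / x) = x • ∫ t in 0..1, f t
  have lhs_eq : (∫ v in (0:ℝ)..x,
      (x:ℂ) ^ (c - 1) * ((v / x : ℝ):ℂ) ^ (c - 1) * (((1 - v / x : ℝ) : ℂ)) ^ (a + x - 1))
      = ∫ v in (0:ℝ)..x, (v : ℂ) ^ (c - 1) * (((1 - v / x : ℝ) : ℂ)) ^ (a + x - 1) := by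
    simp_rw [intervalIntegral.integral_of_le hx.le]
    refine setIntegral_congr_fun measurableSet_Ioc fun v hv => ?_
    have hv0 : (0:ℝ) ≤ v := hv.1.le
    have : (v:ℂ) ^ (c - 1) = (x:ℂ) ^ (c - 1) * ((v / x : ℝ):ℂ) ^ (c - 1) := by
      rw [← Complex.mul_cpow_ofReal_nonneg hx.le (div_nonneg hv0 hx.le),
        ← Complex.ofReal_mul, mul_div_cancel₀ _ hx']
    rw [this]
  rw [← lhs_eq, key]
  rw [Complex.betaIntegral]
  rw [← intervalIntegral.integral_const_mul]
  rw [Complex.real_smul, ← intervalIntegral.integral_const_mul]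
  rw [show (x:ℂ) ^ c = (x:ℂ) * (x:ℂ) ^ (c - 1) by
    conv_lhs => rw [show c = 1 + (c - 1) by ring, Complex.cpow_add _ _ hxc, Complex.cpow_one]]
  refine intervalIntegral.integral_congr fun v _ => ?_
  push_cast
  ring

lemma core (a c : ℂ) (hc : 0 < c.re) :
    Tendsto (fun x : ℝ => Complex.Gamma (a + x) * (x:ℂ) ^ c / Complex.Gamma (a + c + x))
      atTop (𝓝 1) := by
  have hGc : Complex.Gamma c ≠ 0 := Complex.Gamma_ne_zero_of_re_pos hc
  have h1 : Tendsto (fun x : ℝ => (x:ℂ) ^ c * Complex.betaIntegral c (a + x)) atTop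
      (𝓝 (Complex.Gamma c)) := by
    apply (tendsto_I a c hc).congr'
    filter_upwards [eventually_gt_atTop (0:ℝ)] with x hx
    exact (beta_eq a c hx).symm
  have h2 := h1.div_const (Complex.Gamma c)
  rw [div_self hGc] at h2
  apply h2.congr'
  filter_upwards [eventually_gt_atTop (max 0 (-a.re))] with x hx
  have hx0 : (0:ℝ) < x := lt_of_le_of_lt (le_max_left _ _) hx
  have hax : 0 < (a + (x:ℂ)).re := by
    have : -a.re < x := lt_of_le_of_lt (le_max_right _ _) hx
    simp only [Complex.add_re, Complex.ofReal_re]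
    linarith
  have hbeta := Complex.Gamma_mul_Gamma_eq_betaIntegral hc hax
  -- Γ c * Γ (a+x) = Γ (c + (a+x)) * β c (a+x)
  have hG2 : Complex.Gamma (a + c + x) ≠ 0 := by
    apply Complex.Gamma_ne_zero_of_re_pos
    simp only [Complex.add_re, Complex.ofReal_re]
    simp only [Complex.add_re, Complex.ofReal_re] at hax
    linarith
  have hrw : c + (a + (x:ℂ)) = a + c + x := by ring
  rw [hrw] at hbeta
  field_simp
  linear_combination (-(x:ℂ) ^ c) * hbeta

lemma gamma_add_nat {s : ℂ} (hs : 0 < s.re) (n : ℕ) :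
    Complex.Gamma (s + n) = Complex.Gamma s * ∏ j ∈ Finset.range n, (s + j) := by
  induction n with
  | zero => simp
  | succ n ih =>
    have hne : s + (n:ℂ) ≠ 0 := by
      intro h
      have := congrArg Complex.re h
      simp only [Complex.add_re, Complex.natCast_re, Complex.zero_re] at this
      have : (0:ℝ) ≤ (n:ℝ) := Nat.cast_nonneg n
      linarith [hs, congrArg Complex.re h, (by simp : (s + (n:ℂ)).re = s.re + n)]
    have : s + ((n:ℕ)+1 : ℂ) = (s + n) + 1 := by push_cast; ring
    rw [show ((n+1 : ℕ):ℂ) = (n:ℂ) + 1 by push_cast; ring, ← add_assoc,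
      Complex.Gamma_add_one _ hne, ih, Finset.prod_range_succ]
    ring

end GammaRatioAux

open GammaRatioAux in
/-- Gamma-ratio asymptotics: for complex `a, b`,
`Γ(a+x)/Γ(b+x) ~ x^{a-b}` as the real variable `x → +∞`; precisely,
`Γ(a+x)/(Γ(b+x)·x^{a-b}) → 1`, where `x^{a-b} = exp((a-b) log x)`. -/
theorem gamma_ratio_tendsto_one (a b : ℂ) :
    Tendsto
      (fun x : ℝ =>
        Complex.Gamma (a + x) / (Complex.Gamma (b + x) * (x : ℂ) ^ (a - b)))
      atTop (nhds 1) := by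
  set n : ℕ := ⌈(a - b).re⌉₊ + 1 with hn
  have hcre : 0 < (b + n - a).re := by
    have h1 : (a - b).re ≤ (⌈(a - b).re⌉₊ : ℝ) := Nat.le_ceil _
    have : (b + (n:ℂ) - a).re = (n : ℝ) - (a - b).re := by
      simp [Complex.add_re, Complex.sub_re, Complex.natCast_re]; ring
    rw [this, hn]
    push_cast
    linarith
  have hcore := core a (b + n - a) hcre
  have hcore' : Tendsto
      (fun x : ℝ => Complex.Gamma (a + x) * (x:ℂ) ^ (b + n - a) / Complex.Gamma (b + x + n))
      atTop (𝓝 1) := by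
    apply hcore.congr
    intro x
    congr 2
    ring
  -- product factor
  have hprod : Tendsto (fun x : ℝ => ∏ j ∈ Finset.range n, ((b + x + j) / x)) atTop
      (𝓝 1) := by
    have : Tendsto (fun x : ℝ => ∏ j ∈ Finset.range n, ((b + x + j) / x)) atTop
        (𝓝 (∏ _j ∈ Finset.range n, (1:ℂ))) := by
      apply tendsto_finset_prod
      intro j _
      have h0 : Tendsto (fun x : ℝ => ((x:ℂ))⁻¹) atTop (𝓝 0) := by
        have := (Complex.continuous_ofReal.tendsto 0).comp tendsto_inv_atTop_zero
        simpa [Function.comp_def] using this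
      have h1 := (h0.const_mul (b + j)).add_const (1:ℂ)
      rw [mul_zero, zero_add] at h1
      apply h1.congr'
      filter_upwards [eventually_gt_atTop (0:ℝ)] with x hx
      have hxc : (x:ℂ) ≠ 0 := Complex.ofReal_ne_zero.mpr hx.ne'
      field_simp
      ring
    simpa using this
  have hmul := hcore'.mul hprod
  rw [mul_one] at hmul
  apply hmul.congr'
  filter_upwards [eventually_gt_atTop (max 0 (-b.re))] with x hx
  have hx0 : (0:ℝ) < x := lt_of_le_of_lt (le_max_left _ _) hx
  have hbx : 0 < (b + (x:ℂ)).re := by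
    have : -b.re < x := lt_of_le_of_lt (le_max_right _ _) hx
    simp only [Complex.add_re, Complex.ofReal_re]; linarith
  have hxc : (x:ℂ) ≠ 0 := Complex.ofReal_ne_zero.mpr hx0.ne'
  have hGb : Complex.Gamma (b + x) ≠ 0 := Complex.Gamma_ne_zero_of_re_pos hbx
  have hfact : Complex.Gamma (b + x + n) =
      Complex.Gamma (b + x) * ∏ j ∈ Finset.range n, (b + x + j) := gamma_add_nat hbx n
  have hjne : ∀ j ∈ Finset.range n, (b + (x:ℂ) + j) ≠ 0 := by
    intro j _
    intro h
    have := congrArg Complex.re h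
    simp only [Complex.add_re, Complex.ofReal_re, Complex.natCast_re, Complex.zero_re] at this
    have hj : (0:ℝ) ≤ (j:ℝ) := Nat.cast_nonneg j
    simp only [Complex.add_re, Complex.ofReal_re] at hbx
    linarith
  have hprod_ne : (∏ j ∈ Finset.range n, (b + (x:ℂ) + j)) ≠ 0 := Finset.prod_ne_zero_iff.mpr hjne
  have hGbn : Complex.Gamma (b + x + n) ≠ 0 := by
    rw [hfact]; exact mul_ne_zero hGb hprod_ne
  have hpow_ne : (x:ℂ) ^ (a - b) ≠ 0 := by
    rw [Ne, Complex.cpow_eq_zero_iff]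
    exact fun h => hxc h.1
  -- cpow splitting
  have hsplit : (x:ℂ) ^ (b + n - a) = ((x:ℂ) ^ (a - b))⁻¹ * (x:ℂ) ^ (n:ℕ) := by
    rw [show (b + (n:ℂ) - a) = -(a - b) + (n:ℂ) by ring, Complex.cpow_add _ _ hxc,
      Complex.cpow_neg, Complex.cpow_natCast]
  have hprod_div : (∏ j ∈ Finset.range n, ((b + (x:ℂ) + j) / x))
      = (∏ j ∈ Finset.range n, (b + (x:ℂ) + j)) / (x:ℂ) ^ (n:ℕ) := by
    rw [Finset.prod_div_distrib, Finset.prod_const, Finset.card_range]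
  have hxpow_ne : ((x:ℂ)) ^ (n:ℕ) ≠ 0 := pow_ne_zero _ hxc
  rw [hsplit, hprod_div, hfact]
  field_simp
end
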